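/- arXiv:1808.02196 — 5 statements merged into one kernel-verified Lean document; each statement's English description precedes it below -/
import Mathlib

section
/- For any finite subset x of a metric space and any ε > 0, the number of edges of a minimum spanning tree on x whose length is at least ε equals β₀(G_{x,ε}) − 1, where G_{x,ε} is the graph on vertex set x with an edge between two points if and only if their distance is strictly less than ε, and β₀ denotes the number of connected components. -/
open Metric Finset

variable {X : Type*}

/-- The graph on the vertex set `s` whose edges are the (ordered) pairs in `T`. -/
def edgesGraph [MetricSpace X] (s : Finset X) (T : Finset (X × X)) :
    SimpleGraph {x // x ∈ s} :=
  SimpleGraph.fromRel fun a b => ((a : X), (b : X)) ∈ T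

/-- `T` is a spanning tree of the complete graph on the finite metric space `s`:
its edges join distinct points of `s`, the associated graph is connected, and it has
`|s| - 1` edges (each recorded with a single orientation). -/
def IsSpanningTree [MetricSpace X] (s : Finset X) (T : Finset (X × X)) : Prop :=
  (∀ e ∈ T, e.1 ∈ s ∧ e.2 ∈ s ∧ e.1 ≠ e.2 ∧ (e.2, e.1) ∉ T) ∧
  (edgesGraph s T).Connected ∧ T.card = s.card - 1

/-- `T` is a minimum spanning tree on `s`: a spanning tree of minimal total length. -/
def IsMST [MetricSpace X] (s : Finset X) (T : Finset (X × X)) : Prop :=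
  IsSpanningTree s T ∧
    ∀ T' : Finset (X × X), IsSpanningTree s T' →
      ∑ e ∈ T, dist e.1 e.2 ≤ ∑ e ∈ T', dist e.1 e.2

/-- The geometric graph `G_{s,ε}`: points of `s` joined iff their distance is `< ε`. -/
def geomGraph [MetricSpace X] (s : Finset X) (ε : ℝ) : SimpleGraph {x // x ∈ s} :=
  SimpleGraph.fromRel fun a b => dist (a : X) (b : X) < ε

namespace MSTAux
open SimpleGraph

variable {V : Type*}

lemma reach_transfer {G G' : SimpleGraph V} (h : ∀ a b, G.Adj a b → G'.Reachable a b)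
    {x y : V} (hxy : G.Reachable x y) : G'.Reachable x y := by
  obtain ⟨p⟩ := hxy
  induction p with
  | nil => exact Reachable.refl _
  | cons ha _ ih => exact (h _ _ ha).trans ih

lemma finite_comp [Finite V] (G : SimpleGraph V) : Finite G.ConnectedComponent :=
  Finite.of_surjective G.connectedComponentMk Quot.mk_surjective

lemma card_comp_eq {G G' : SimpleGraph V} (hle : G ≤ G')
    (h : ∀ a b, G'.Adj a b → G.Reachable a b) :
    Nat.card G'.ConnectedComponent = Nat.card G.ConnectedComponent := by
  refine (Nat.card_eq_of_bijective
    (ConnectedComponent.map (Hom.ofLE hle)) ⟨?_, ?_⟩).symm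
  · refine ConnectedComponent.ind₂ fun x y hxy => ?_
    simp only [ConnectedComponent.map_mk, Hom.ofLE_apply] at hxy
    exact ConnectedComponent.sound (reach_transfer h (ConnectedComponent.exact hxy))
  · exact ConnectedComponent.ind fun v => ⟨G.connectedComponentMk v, rfl⟩

lemma walk_split {G : SimpleGraph V} {u v a b : V} (p : G.Walk a b) :
    (G.deleteEdges {s(u,v)}).Reachable a b ∨
      ((G.deleteEdges {s(u,v)}).Reachable a u ∧ (G.deleteEdges {s(u,v)}).Reachable v b) ∨
      ((G.deleteEdges {s(u,v)}).Reachable a v ∧ (G.deleteEdges {s(u,v)}).Reachable u b) := by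
  induction p with
  | nil => exact Or.inl (Reachable.refl _)
  | @cons a c b ha q ih =>
    by_cases he : s(a, c) = s(u, v)
    · rw [Sym2.eq_iff] at he
      rcases he with ⟨rfl, rfl⟩ | ⟨rfl, rfl⟩
      · rcases ih with h1 | ⟨h1, h2⟩ | ⟨h1, h2⟩
        · exact Or.inr (Or.inl ⟨Reachable.refl _, h1⟩)
        · exact Or.inr (Or.inl ⟨Reachable.refl _, h2⟩)
        · exact Or.inl h2
      · rcases ih with h1 | ⟨h1, h2⟩ | ⟨h1, h2⟩
        · exact Or.inr (Or.inr ⟨Reachable.refl _, h1⟩)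
        · exact Or.inl h2
        · exact Or.inr (Or.inr ⟨Reachable.refl _, h2⟩)
    · have hadj : (G.deleteEdges {s(u,v)}).Adj a c := by
        simp only [deleteEdges_adj, Set.mem_singleton_iff]
        exact ⟨ha, he⟩
      rcases ih with h1 | ⟨h1, h2⟩ | ⟨h1, h2⟩
      · exact Or.inl (hadj.reachable.trans h1)
      · exact Or.inr (Or.inl ⟨hadj.reachable.trans h1, h2⟩)
      · exact Or.inr (Or.inr ⟨hadj.reachable.trans h1, h2⟩)

lemma nat_card_option (α : Type*) [Finite α] : Nat.card (Option α) = Nat.card α + 1 := by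
  haveI := Fintype.ofFinite α
  simp [Nat.card_eq_fintype_card]

lemma card_comp_deleteEdges_le [Finite V] (G : SimpleGraph V) (u v : V) :
    Nat.card (G.deleteEdges {s(u,v)}).ConnectedComponent ≤ Nat.card G.ConnectedComponent + 1 := by
  classical
  haveI := finite_comp G
  haveI := Fintype.ofFinite G.ConnectedComponent
  haveI := finite_comp (G.deleteEdges {s(u,v)})
  set G' := G.deleteEdges {s(u,v)} with hG'
  set φ : G'.ConnectedComponent → G.ConnectedComponent :=
    ConnectedComponent.map (Hom.ofLE (G.deleteEdges_le _)) with hφ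
  set ψ : G'.ConnectedComponent → Option G.ConnectedComponent :=
    fun C => if C = G'.connectedComponentMk v then none else some (φ C) with hψ
  have hinj : Function.Injective ψ := by
    refine ConnectedComponent.ind₂ (fun x y h => ?_)
    by_cases h1 : G'.connectedComponentMk x = G'.connectedComponentMk v <;>
      by_cases h2 : G'.connectedComponentMk y = G'.connectedComponentMk v
    · exact h1.trans h2.symm
    · simp [hψ, if_pos h1, if_neg h2] at h
    · simp [hψ, if_neg h1, if_pos h2] at h
    · simp only [hψ, if_neg h1, if_neg h2, Option.some.injEq, hφ, ConnectedComponent.map_mk,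
        Hom.ofLE_apply] at h
      obtain ⟨p⟩ := ConnectedComponent.exact h
      rcases walk_split (u := u) (v := v) p with hr | ⟨hr1, hr2⟩ | ⟨hr1, hr2⟩
      · exact ConnectedComponent.sound hr
      · exact absurd (ConnectedComponent.sound hr2.symm) h2
      · exact absurd (ConnectedComponent.sound hr1) h1
  calc Nat.card G'.ConnectedComponent ≤ Nat.card (Option G.ConnectedComponent) :=
        Nat.card_le_card_of_injective ψ hinj
    _ = Nat.card G.ConnectedComponent + 1 := nat_card_option _

lemma card_comp_deleteEdges_eq [Finite V] {G : SimpleGraph V} {u v : V} (hadj : G.Adj u v)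
    (hnr : ¬ (G.deleteEdges {s(u,v)}).Reachable u v) :
    Nat.card (G.deleteEdges {s(u,v)}).ConnectedComponent = Nat.card G.ConnectedComponent + 1 := by
  classical
  haveI := finite_comp G
  haveI := Fintype.ofFinite G.ConnectedComponent
  haveI := finite_comp (G.deleteEdges {s(u,v)})
  set G' := G.deleteEdges {s(u,v)} with hG'
  set φ : G'.ConnectedComponent → G.ConnectedComponent :=
    ConnectedComponent.map (Hom.ofLE (G.deleteEdges_le _)) with hφ
  set ψ : G'.ConnectedComponent → Option G.ConnectedComponent :=
    fun C => if C = G'.connectedComponentMk v then none else some (φ C) with hψ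
  have hinj : Function.Injective ψ := by
    refine ConnectedComponent.ind₂ (fun x y h => ?_)
    by_cases h1 : G'.connectedComponentMk x = G'.connectedComponentMk v <;>
      by_cases h2 : G'.connectedComponentMk y = G'.connectedComponentMk v
    · exact h1.trans h2.symm
    · simp [hψ, if_pos h1, if_neg h2] at h
    · simp [hψ, if_neg h1, if_pos h2] at h
    · simp only [hψ, if_neg h1, if_neg h2, Option.some.injEq, hφ, ConnectedComponent.map_mk,
        Hom.ofLE_apply] at h
      obtain ⟨p⟩ := ConnectedComponent.exact h
      rcases walk_split (u := u) (v := v) p with hr | ⟨hr1, hr2⟩ | ⟨hr1, hr2⟩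
      · exact ConnectedComponent.sound hr
      · exact absurd (ConnectedComponent.sound hr2.symm) h2
      · exact absurd (ConnectedComponent.sound hr1) h1
  have hsurj : Function.Surjective ψ := by
    rintro (_ | D)
    · exact ⟨G'.connectedComponentMk v, by simp [hψ]⟩
    · refine ConnectedComponent.ind (fun w => ?_) D
      by_cases hwv : G'.Reachable w v
      · refine ⟨G'.connectedComponentMk u, ?_⟩
        have hne : G'.connectedComponentMk u ≠ G'.connectedComponentMk v :=
          fun hc => hnr (ConnectedComponent.exact hc)
        simp only [hψ, if_neg hne, hφ, ConnectedComponent.map_mk,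
          Hom.ofLE_apply, Option.some.injEq]
        exact ConnectedComponent.sound
          ((hadj.reachable.trans ((hwv.mono (G.deleteEdges_le _)).symm)).symm).symm
      · refine ⟨G'.connectedComponentMk w, ?_⟩
        have hne : G'.connectedComponentMk w ≠ G'.connectedComponentMk v :=
          fun hc => hwv (ConnectedComponent.exact hc)
        simp [hψ, if_neg hne, hφ]
  rw [Nat.card_eq_of_bijective ψ ⟨hinj, hsurj⟩, nat_card_option]


lemma edge_delete_count [Finite V] {G : SimpleGraph V} {u v : V} (h : G.Adj u v) :
    Nat.card (G.deleteEdges {s(u,v)}).edgeSet + 1 = Nat.card G.edgeSet := by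
  rw [Nat.card_coe_set_eq, Nat.card_coe_set_eq, edgeSet_deleteEdges]
  exact Set.ncard_diff_singleton_add_one (G.mem_edgeSet.2 h) (Set.toFinite _)

lemma card_comp_bot [Fintype V] :
    Nat.card (⊥ : SimpleGraph V).ConnectedComponent = Fintype.card V := by
  rw [← Nat.card_eq_fintype_card]
  refine (Nat.card_eq_of_bijective (⊥ : SimpleGraph V).connectedComponentMk ⟨?_, ?_⟩).symm
  · intro x y h
    exact reachable_bot.1 (ConnectedComponent.exact h)
  · exact Quot.mk_surjective

lemma exists_adj_of_card_edge {G : SimpleGraph V} (h : Nat.card G.edgeSet ≠ 0) :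
    ∃ u v, G.Adj u v := by
  have hne : G.edgeSet.Nonempty := by
    rw [Set.nonempty_iff_ne_empty]
    rintro hc
    rw [Nat.card_coe_set_eq, hc, Set.ncard_empty] at h
    exact h rfl
  obtain ⟨e, he⟩ := hne
  revert he
  exact Sym2.ind (fun x y he => ⟨x, y, he⟩) e

lemma acyclic_mono {G G' : SimpleGraph V} (h : G ≤ G') (ha : G'.IsAcyclic) : G.IsAcyclic := by
  intro v p hp
  exact ha (p.mapLe h) (hp.mapLe h)

lemma card_le_aux [Fintype V] :
    ∀ (m : ℕ) (G : SimpleGraph V), Nat.card G.edgeSet ≤ m →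
      Fintype.card V ≤ Nat.card G.ConnectedComponent + Nat.card G.edgeSet := by
  intro m
  induction m with
  | zero =>
    intro G hG
    have h0 : Nat.card G.edgeSet = 0 := Nat.le_zero.1 hG
    obtain rfl : G = ⊥ := by
      rw [← edgeSet_eq_empty]
      rw [Nat.card_coe_set_eq] at h0
      exact (Set.ncard_eq_zero (Set.toFinite _)).1 h0
    rw [card_comp_bot]
    omega
  | succ m ih =>
    intro G hG
    by_cases h0 : Nat.card G.edgeSet ≤ m
    · exact ih G h0
    obtain ⟨u, v, huv⟩ := exists_adj_of_card_edge (G := G) (by omega)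
    have hed := edge_delete_count huv
    have h1 := card_comp_deleteEdges_le G u v
    have h2 := ih (G.deleteEdges {s(u,v)}) (by omega)
    omega

lemma card_acyclic_aux [Fintype V] :
    ∀ (m : ℕ) (G : SimpleGraph V), Nat.card G.edgeSet ≤ m → G.IsAcyclic →
      Nat.card G.ConnectedComponent + Nat.card G.edgeSet = Fintype.card V := by
  intro m
  induction m with
  | zero =>
    intro G hG _
    have h0 : Nat.card G.edgeSet = 0 := Nat.le_zero.1 hG
    obtain rfl : G = ⊥ := by
      rw [← edgeSet_eq_empty]
      rw [Nat.card_coe_set_eq] at h0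
      exact (Set.ncard_eq_zero (Set.toFinite _)).1 h0
    rw [card_comp_bot]
    omega
  | succ m ih =>
    intro G hG hac
    by_cases h0 : Nat.card G.edgeSet ≤ m
    · exact ih G h0 hac
    obtain ⟨u, v, huv⟩ := exists_adj_of_card_edge (G := G) (by omega)
    have hbr : ¬ (G.deleteEdges {s(u,v)}).Reachable u v :=
      ((isAcyclic_iff_forall_adj_isBridge.1 hac) huv)
    have hed := edge_delete_count huv
    have h1 := card_comp_deleteEdges_eq huv hbr
    have hac' : (G.deleteEdges {s(u,v)}).IsAcyclic := acyclic_mono (G.deleteEdges_le _) hac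
    have h2 := ih (G.deleteEdges {s(u,v)}) (by omega) hac'
    omega





variable [MetricSpace X]

lemma edgesGraph_adj (s : Finset X) (T : Finset (X × X)) (a b : {x // x ∈ s}) :
    (edgesGraph s T).Adj a b ↔ a ≠ b ∧ (((a : X), (b : X)) ∈ T ∨ ((b : X), (a : X)) ∈ T) :=
  Iff.rfl

lemma edgesGraph_mono (s : Finset X) {T₁ T₂ : Finset (X × X)} (h : T₁ ⊆ T₂) :
    edgesGraph s T₁ ≤ edgesGraph s T₂ := by
  intro a b hab
  obtain ⟨hne, hw⟩ := hab
  exact ⟨hne, hw.imp (fun h' => h h') (fun h' => h h')⟩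

lemma edgesGraph_card (s : Finset X) (T : Finset (X × X))
    (hP : ∀ e ∈ T, e.1 ∈ s ∧ e.2 ∈ s ∧ e.1 ≠ e.2 ∧ (e.2, e.1) ∉ T) :
    Nat.card (edgesGraph s T).edgeSet = T.card := by
  classical
  have hf : ∀ e : {e // e ∈ T},
      s((⟨e.1.1, (hP e.1 e.2).1⟩ : {x // x ∈ s}), (⟨e.1.2, (hP e.1 e.2).2.1⟩ : {x // x ∈ s}))
        ∈ (edgesGraph s T).edgeSet := by
    intro e
    rw [SimpleGraph.mem_edgeSet]
    exact ⟨fun hcc => (hP e.1 e.2).2.2.1 (congrArg Subtype.val hcc), Or.inl e.2⟩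
  have hbij : Function.Bijective (fun e : {e // e ∈ T} =>
      (⟨_, hf e⟩ : (edgesGraph s T).edgeSet)) := by
    constructor
    · intro e₁ e₂ h
      rw [Subtype.ext_iff] at h
      simp only [Sym2.eq_iff] at h
      rcases h with ⟨h1, h2⟩ | ⟨h1, h2⟩
      · exact Subtype.ext (Prod.ext_iff.2
          ⟨congrArg Subtype.val h1, congrArg Subtype.val h2⟩)
      · exfalso
        have he : e₁.1 = (e₂.1.2, e₂.1.1) :=
          Prod.ext_iff.2 ⟨congrArg Subtype.val h1, congrArg Subtype.val h2⟩
        exact (hP e₂.1 e₂.2).2.2.2 (he ▸ e₁.2)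
    · rintro ⟨ed, hed⟩
      revert hed
      refine Sym2.ind (fun x y hed => ?_) ed
      rw [SimpleGraph.mem_edgeSet] at hed
      obtain ⟨hne, h | h⟩ := hed
      · exact ⟨⟨((x : X), (y : X)), h⟩, Subtype.ext rfl⟩
      · exact ⟨⟨((y : X), (x : X)), h⟩, Subtype.ext (Sym2.eq_swap)⟩
  rw [← Nat.card_eq_of_bijective _ hbij, Nat.card_eq_fintype_card, Fintype.card_coe]

lemma avoid_walk_reach [DecidableEq X] {s : Finset X} {T : Finset (X × X)} (e₀ : X × X)
    {c b : {x // x ∈ s}} (q : (edgesGraph s T).Walk c b)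
    (hq : ∀ x ∈ q.support, ∀ y ∈ q.support, ((x : X), (y : X)) ≠ e₀) :
    (edgesGraph s (T.erase e₀)).Reachable c b := by
  induction q with
  | nil => exact Reachable.refl _
  | @cons x y b' hxy q ih =>
    obtain ⟨hne, hw⟩ := id hxy
    have hx : x ∈ (Walk.cons hxy q).support := Walk.start_mem_support _
    have hy : y ∈ (Walk.cons hxy q).support := by
      rw [Walk.support_cons]
      exact List.mem_cons_of_mem _ (Walk.start_mem_support _)
    have hadj : (edgesGraph s (T.erase e₀)).Adj x y := by
      refine ⟨hne, ?_⟩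
      rcases hw with h | h
      · exact Or.inl (Finset.mem_erase.2 ⟨hq x hx y hy, h⟩)
      · exact Or.inr (Finset.mem_erase.2 ⟨hq y hy x hx, h⟩)
    refine hadj.reachable.trans (ih fun x' hx' y' hy' => ?_)
    exact hq x' (by rw [Walk.support_cons]; exact List.mem_cons_of_mem _ hx')
      y' (by rw [Walk.support_cons]; exact List.mem_cons_of_mem _ hy')

lemma exchange [DecidableEq X] (s : Finset X) (T : Finset (X × X)) (ε : ℝ)
    {a b : {x // x ∈ s}} (p : (edgesGraph s T).Walk a b) :
    p.IsPath →
    ¬ (edgesGraph s (T.filter fun e => ¬ ε ≤ dist e.1 e.2)).Reachable a b →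
    ∃ e ∈ T, ε ≤ dist e.1 e.2 ∧ ∃ (h1 : e.1 ∈ s) (h2 : e.2 ∈ s),
      (((edgesGraph s (T.erase e)).Reachable a ⟨e.1, h1⟩ ∧
        (edgesGraph s (T.erase e)).Reachable ⟨e.2, h2⟩ b) ∨
       ((edgesGraph s (T.erase e)).Reachable a ⟨e.2, h2⟩ ∧
        (edgesGraph s (T.erase e)).Reachable ⟨e.1, h1⟩ b)) := by
  induction p with
  | nil => exact fun _ hnr => (hnr (Reachable.refl _)).elim
  | @cons a c b' hac q ih =>
    intro hp hnr
    obtain ⟨hne, hw⟩ := hac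
    by_cases hshort : dist (a : X) (c : X) < ε
    · have hHadj : (edgesGraph s (T.filter fun e => ¬ ε ≤ dist e.1 e.2)).Adj a c := by
        refine ⟨hne, ?_⟩
        rcases hw with h | h
        · exact Or.inl (Finset.mem_filter.2 ⟨h, not_le.2 hshort⟩)
        · exact Or.inr (Finset.mem_filter.2 ⟨h, not_le.2 (by simpa [_root_.dist_comm] using hshort)⟩)
      have hnr' := fun hr => hnr (hHadj.reachable.trans hr)
      obtain ⟨e, heT, helong, h1, h2, hcase⟩ := ih hp.of_cons hnr'
      refine ⟨e, heT, helong, h1, h2, ?_⟩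
      have hadj' : (edgesGraph s (T.erase e)).Adj a c := by
        refine ⟨hne, ?_⟩
        rcases hw with h | h
        · refine Or.inl (Finset.mem_erase.2 ⟨?_, h⟩)
          rintro rfl
          exact absurd helong (not_le.2 hshort)
        · refine Or.inr (Finset.mem_erase.2 ⟨?_, h⟩)
          rintro rfl
          exact absurd (by simpa [_root_.dist_comm] using helong : ε ≤ dist (a : X) (c : X))
            (not_le.2 hshort)
      rcases hcase with ⟨hr1, hr2⟩ | ⟨hr1, hr2⟩
      · exact Or.inl ⟨hadj'.reachable.trans hr1, hr2⟩
      · exact Or.inr ⟨hadj'.reachable.trans hr1, hr2⟩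
    · have hlong : ε ≤ dist (a : X) (c : X) := not_lt.1 hshort
      have hanotin : a ∉ q.support := ((Walk.cons_isPath_iff _ _).1 hp).2
      rcases hw with h | h
      · refine ⟨((a : X), (c : X)), h, hlong, a.2, c.2, Or.inl ⟨Reachable.refl _, ?_⟩⟩
        refine avoid_walk_reach _ q fun x hx y hy hcc => ?_
        exact hanotin ((Subtype.ext (congrArg Prod.fst hcc) : x = a) ▸ hx)
      · refine ⟨((c : X), (a : X)), h, (by simpa [_root_.dist_comm] using hlong), c.2, a.2,
          Or.inr ⟨Reachable.refl _, ?_⟩⟩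
        refine avoid_walk_reach _ q fun x hx y hy hcc => ?_
        exact hanotin ((Subtype.ext (congrArg Prod.snd hcc) : y = a) ▸ hy)

end MSTAux

/-- for a nonempty finite subset of a metric space, the number of
minimum spanning tree edges of length at least `ε` equals the number of connected
components of `G_{x,ε}` minus `1`. -/
theorem stmt3 [MetricSpace X] (s : Finset X) (hs : s.Nonempty)
    (T : Finset (X × X)) (hT : IsMST s T) (ε : ℝ) (hε : 0 < ε) :
    (T.filter fun e => ε ≤ dist e.1 e.2).card =
      Nat.card (geomGraph s ε).ConnectedComponent - 1 := by
  classical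
  obtain ⟨⟨hTprop, hTconn, hTcard⟩, hmin⟩ := hT
  haveI : Nonempty {x // x ∈ s} := Finset.nonempty_coe_sort.2 hs
  set S : Finset (X × X) := T.filter (fun e => ¬ ε ≤ dist e.1 e.2) with hSdef
  have hSsub : S ⊆ T := Finset.filter_subset _ _
  have hSprop : ∀ e ∈ S, e.1 ∈ s ∧ e.2 ∈ s ∧ e.1 ≠ e.2 ∧ (e.2, e.1) ∉ S := by
    intro e he
    obtain ⟨h1, h2, h3, h4⟩ := hTprop e (hSsub he)
    exact ⟨h1, h2, h3, fun hc => h4 (hSsub hc)⟩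
  have hGTedges : Nat.card (edgesGraph s T).edgeSet = T.card := MSTAux.edgesGraph_card s T hTprop
  have hfc : Fintype.card {x // x ∈ s} = s.card := Fintype.card_coe s
  have hs1 : 1 ≤ s.card := Finset.card_pos.2 hs
  have hGTacyc : (edgesGraph s T).IsAcyclic := by
    rw [SimpleGraph.isAcyclic_iff_forall_adj_isBridge]
    intro u v huv
    by_contra hbr
    have hre : ((edgesGraph s T).deleteEdges {s(u,v)}).Reachable u v := by
      by_contra hnr
      exact hbr hnr
    have hconn' : ((edgesGraph s T).deleteEdges {s(u,v)}).Connected := by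
      refine SimpleGraph.Connected.mk (fun x y => MSTAux.reach_transfer ?_ (hTconn.preconnected x y))
      intro x' y' hxy
      by_cases he : s(x', y') = s(u, v)
      · rw [Sym2.eq_iff] at he
        rcases he with ⟨rfl, rfl⟩ | ⟨rfl, rfl⟩
        · exact hre
        · exact hre.symm
      · exact SimpleGraph.Adj.reachable (by
          simp only [SimpleGraph.deleteEdges_adj, Set.mem_singleton_iff]
          exact ⟨hxy, he⟩)
    have hcomp1 : Nat.card ((edgesGraph s T).deleteEdges {s(u,v)}).ConnectedComponent = 1 := by
      rw [Nat.card_eq_one_iff_unique]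
      exact ⟨hconn'.preconnected.subsingleton_connectedComponent,
        ⟨SimpleGraph.connectedComponentMk _ (Classical.arbitrary _)⟩⟩
    have hle := MSTAux.card_le_aux (V := {x // x ∈ s}) _
      ((edgesGraph s T).deleteEdges {s(u,v)}) le_rfl
    have hed := MSTAux.edge_delete_count huv
    have h2 : (1 : ℕ) < Fintype.card {x // x ∈ s} :=
      Fintype.one_lt_card_iff_nontrivial.2 ⟨⟨u, v, huv.ne⟩⟩
    omega
  have hHle : edgesGraph s S ≤ geomGraph s ε := by
    intro a b hab
    obtain ⟨hne, hw⟩ := hab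
    refine ⟨hne, Or.inl ?_⟩
    rcases hw with h | h
    · exact not_le.1 (Finset.mem_filter.1 h).2
    · have := not_le.1 (Finset.mem_filter.1 h).2
      rwa [_root_.dist_comm] at this
  have hkey : ∀ a b, (geomGraph s ε).Adj a b → (edgesGraph s S).Reachable a b := by
    intro a b hab
    by_contra hnr
    obtain ⟨hne, hd⟩ := hab
    have hdist : dist (a : X) (b : X) < ε := by
      rcases hd with h | h
      · exact h
      · rwa [_root_.dist_comm] at h
    have hab1 : ((a : X), (b : X)) ∉ T := fun hc =>
      hnr (SimpleGraph.Adj.reachable ⟨hne, Or.inl (Finset.mem_filter.2 ⟨hc, not_le.2 hdist⟩)⟩)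
    have hab2 : ((b : X), (a : X)) ∉ T := fun hc =>
      hnr (SimpleGraph.Adj.reachable ⟨hne, Or.inr (Finset.mem_filter.2 ⟨hc, not_le.2
        (by rw [_root_.dist_comm] at hdist; exact hdist)⟩)⟩)
    obtain ⟨w⟩ := hTconn.preconnected a b
    obtain ⟨e₀, he₀T, he₀long, h1, h2, hcase⟩ :=
      MSTAux.exchange s T ε w.toPath.1 w.toPath.2 hnr
    set T' : Finset (X × X) := insert ((a : X), (b : X)) (T.erase e₀) with hT'def
    have habnotin : ((a : X), (b : X)) ∉ T.erase e₀ := fun hc =>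
      hab1 (Finset.mem_of_mem_erase hc)
    have hT'prop : ∀ f ∈ T', f.1 ∈ s ∧ f.2 ∈ s ∧ f.1 ≠ f.2 ∧ (f.2, f.1) ∉ T' := by
      intro f hf
      rcases Finset.mem_insert.1 hf with rfl | hf'
      · refine ⟨a.2, b.2, fun hcc => hne (Subtype.ext hcc), ?_⟩
        intro hc
        rcases Finset.mem_insert.1 hc with hcc | hcc
        · exact hne (Subtype.ext (congrArg Prod.fst hcc)).symm
        · exact hab2 (Finset.mem_of_mem_erase hcc)
      · obtain ⟨hh1, hh2, hh3, hh4⟩ := hTprop f (Finset.mem_of_mem_erase hf')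
        refine ⟨hh1, hh2, hh3, ?_⟩
        intro hc
        rcases Finset.mem_insert.1 hc with hcc | hcc
        · refine hab2 ?_
          have hfe : f = ((b : X), (a : X)) :=
            Prod.ext_iff.2 ⟨congrArg Prod.snd hcc, congrArg Prod.fst hcc⟩
          exact hfe ▸ Finset.mem_of_mem_erase hf'
        · exact hh4 (Finset.mem_of_mem_erase hcc)
    have hle'' : edgesGraph s (T.erase e₀) ≤ edgesGraph s T' :=
      MSTAux.edgesGraph_mono s (Finset.subset_insert _ _)
    have hadjab : (edgesGraph s T').Adj a b := ⟨hne, Or.inl (Finset.mem_insert_self _ _)⟩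
    have hre₀ : (edgesGraph s T').Reachable ⟨e₀.1, h1⟩ ⟨e₀.2, h2⟩ := by
      rcases hcase with ⟨hr1, hr2⟩ | ⟨hr1, hr2⟩
      · exact (hr1.mono hle'').symm.trans (hadjab.reachable.trans (hr2.mono hle'').symm)
      · exact (hr2.mono hle'').trans ((hadjab.symm.reachable).trans (hr1.mono hle''))
    have hconn' : (edgesGraph s T').Connected := by
      refine SimpleGraph.Connected.mk (fun x y => MSTAux.reach_transfer ?_ (hTconn.preconnected x y))
      intro x' y' hxy
      obtain ⟨hnexy, hw⟩ := hxy
      rcases hw with h | h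
      · by_cases heq : ((x' : X), (y' : X)) = e₀
        · have hx : x' = ⟨e₀.1, h1⟩ := Subtype.ext (congrArg Prod.fst heq)
          have hy : y' = ⟨e₀.2, h2⟩ := Subtype.ext (congrArg Prod.snd heq)
          rw [hx, hy]; exact hre₀
        · exact SimpleGraph.Adj.reachable
            ⟨hnexy, Or.inl (Finset.mem_insert_of_mem (Finset.mem_erase.2 ⟨heq, h⟩))⟩
      · by_cases heq : ((y' : X), (x' : X)) = e₀
        · have hx : x' = ⟨e₀.2, h2⟩ := Subtype.ext (congrArg Prod.snd heq)
          have hy : y' = ⟨e₀.1, h1⟩ := Subtype.ext (congrArg Prod.fst heq)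
          rw [hx, hy]; exact hre₀.symm
        · exact SimpleGraph.Adj.reachable
            ⟨hnexy, Or.inr (Finset.mem_insert_of_mem (Finset.mem_erase.2 ⟨heq, h⟩))⟩
    have hcard' : T'.card = s.card - 1 := by
      rw [hT'def, Finset.card_insert_of_notMem habnotin, Finset.card_erase_of_mem he₀T]
      have h1T : 1 ≤ T.card := Finset.card_pos.2 ⟨e₀, he₀T⟩
      omega
    have hsum := hmin T' ⟨hT'prop, hconn', hcard'⟩
    have hsum1 : ∑ e ∈ T.erase e₀, dist e.1 e.2 + dist e₀.1 e₀.2 = ∑ e ∈ T, dist e.1 e.2 :=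
      Finset.sum_erase_add _ _ he₀T
    have hsum2 : ∑ e ∈ T', dist e.1 e.2
        = dist ((a : X), (b : X)).1 ((a : X), (b : X)).2 + ∑ e ∈ T.erase e₀, dist e.1 e.2 :=
      Finset.sum_insert habnotin
    have hd2 : dist ((a : X), (b : X)).1 ((a : X), (b : X)).2 = dist (a : X) (b : X) := rfl
    rw [hsum2, hd2] at hsum
    linarith
  have hcompeq := MSTAux.card_comp_eq hHle hkey
  have hHacyc : (edgesGraph s S).IsAcyclic :=
    MSTAux.acyclic_mono (MSTAux.edgesGraph_mono s hSsub) hGTacyc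
  have hHcount := MSTAux.card_acyclic_aux _ (edgesGraph s S) le_rfl hHacyc
  rw [MSTAux.edgesGraph_card s S hSprop] at hHcount
  have hsplit : (T.filter fun e => ε ≤ dist e.1 e.2).card + S.card = T.card := by
    rw [hSdef]
    exact Finset.card_filter_add_card_filter_not _
  rw [hcompeq]
  omega
end

section
/- For an n,p,q,r-uniform occupancy indicator X built from n i.i.d. samples, P(X = 1) = (1 − q/n)^n ∑_{k=0}^{r} (−1)^k C(r,k) (1 − k·(p/n)/(1 − q/n))^n, and consequently lim_{n→∞} P(X = 1) = e^{−q}(1 − e^{−p})^r. -/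
open MeasureTheory Filter

lemma ie_aux {Ω : Type*} [MeasurableSpace Ω] (μ : Measure Ω) [IsFiniteMeasure μ]
    {ι : Type*} [DecidableEq ι] (E : ι → Set Ω) (hE : ∀ k, MeasurableSet (E k))
    (S : Finset ι) :
    ∀ C : Set Ω, MeasurableSet C →
    (μ (C ∩ ⋂ k ∈ S, (E k)ᶜ)).toReal =
      ∑ T ∈ S.powerset, (-1 : ℝ) ^ T.card * (μ (C ∩ ⋂ k ∈ T, E k)).toReal := by
  induction S using Finset.induction_on with
  | empty => intro C hC; simp
  | @insert a S ha IH =>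
    intro C hC
    have h1 := IH C hC
    have h2 := IH (C ∩ E a) (hC.inter (hE a))
    have hset : C ∩ ⋂ k ∈ insert a S, (E k)ᶜ
        = (C ∩ ⋂ k ∈ S, (E k)ᶜ) \ E a := by
      rw [Finset.set_biInter_insert]
      ext x
      simp only [Set.mem_inter_iff, Set.mem_compl_iff, Set.mem_diff]
      tauto
    have hset2 : (C ∩ E a) ∩ ⋂ k ∈ S, (E k)ᶜ = (C ∩ ⋂ k ∈ S, (E k)ᶜ) ∩ E a := by
      ext x
      simp only [Set.mem_inter_iff, Set.mem_iInter, Set.mem_compl_iff]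
      tauto
    have hsub := measure_inter_add_diff (μ := μ) (C ∩ ⋂ k ∈ S, (E k)ᶜ) (hE a)
    have hL : (μ (C ∩ ⋂ k ∈ insert a S, (E k)ᶜ)).toReal
        = (μ (C ∩ ⋂ k ∈ S, (E k)ᶜ)).toReal
          - (μ ((C ∩ E a) ∩ ⋂ k ∈ S, (E k)ᶜ)).toReal := by
      rw [hset, hset2]
      have h := congrArg ENNReal.toReal hsub
      rw [ENNReal.toReal_add (measure_ne_top μ _) (measure_ne_top μ _)] at h
      linarith
    have hcongr : ∀ T ∈ S.powerset, (-1 : ℝ) ^ (insert a T).card *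
        (μ (C ∩ ⋂ k ∈ insert a T, E k)).toReal
        = -((-1 : ℝ) ^ T.card * (μ ((C ∩ E a) ∩ ⋂ k ∈ T, E k)).toReal) := by
      intro T hT
      have haT : a ∉ T := fun h => ha (Finset.mem_powerset.1 hT h)
      have hTeq : C ∩ ⋂ k ∈ insert a T, E k = (C ∩ E a) ∩ ⋂ k ∈ T, E k := by
        rw [Finset.set_biInter_insert]
        ext x
        simp only [Set.mem_inter_iff]
        tauto
      rw [hTeq, Finset.card_insert_of_notMem haT, pow_succ]
      ring
    rw [hL, h1, h2, Finset.sum_powerset_insert ha, Finset.sum_congr rfl hcongr,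
      Finset.sum_neg_distrib]
    ring

lemma avoid_measure {M : Type*} [MeasurableSpace M] (ν : Measure M) [IsProbabilityMeasure ν]
    (n : ℕ) (C : Set M) :
    (Measure.pi fun _ : Fin n => ν) {x : Fin n → M | ∀ i, x i ∉ C} = ν Cᶜ ^ n := by
  have h : {x : Fin n → M | ∀ i, x i ∉ C} = Set.pi Set.univ (fun _ : Fin n => Cᶜ) := by
    ext x; simp [Set.mem_pi]
  rw [h, Measure.pi_pi]
  simp

lemma key {M : Type*} [MeasurableSpace M]
    (r : ℕ) (p q : ℝ) (hp : 0 < p) (hq : 0 < q)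
    (ν : Measure M) [IsProbabilityMeasure ν]
    (A : Set M) (B : Fin r → Set M)
    (hAmeas : MeasurableSet A) (hBmeas : ∀ k, MeasurableSet (B k))
    (n : ℕ) (hn : 0 < n)
    (hAq : ν A = ENNReal.ofReal (q / n))
    (hBp : ∀ k, ν (B k) = ENNReal.ofReal (p / n))
    (hABdisj : ∀ k, Disjoint A (B k))
    (hBdisj : Pairwise fun k k' => Disjoint (B k) (B k')) :
    ((Measure.pi fun _ : Fin n => ν)
        {x : Fin n → M | (∀ i, x i ∉ A) ∧ ∀ k, ∃ i, x i ∈ B k}).toReal =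
      ∑ k ∈ Finset.range (r + 1),
        (-1 : ℝ) ^ k * (r.choose k) * (1 - (q + k * p) / n) ^ n := by
  have hn' : (0:ℝ) < n := by exact_mod_cast hn
  set μ := Measure.pi fun _ : Fin n => ν with hμ
  set C : Set (Fin n → M) := {x | ∀ i, x i ∉ A} with hCdef
  set E : Fin r → Set (Fin n → M) := fun k => {x | ∀ i, x i ∉ B k} with hEdef
  have hC : MeasurableSet C := by
    have : C = ⋂ i, (fun x : Fin n → M => x i) ⁻¹' Aᶜ := by
      ext x; simp [hCdef]
    rw [this]
    exact MeasurableSet.iInter fun i => measurable_pi_apply i hAmeas.compl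
  have hE : ∀ k, MeasurableSet (E k) := by
    intro k
    have : E k = ⋂ i, (fun x : Fin n → M => x i) ⁻¹' (B k)ᶜ := by
      ext x; simp [hEdef]
    rw [this]
    exact MeasurableSet.iInter fun i => measurable_pi_apply i (hBmeas k).compl
  have hev : {x : Fin n → M | (∀ i, x i ∉ A) ∧ ∀ k, ∃ i, x i ∈ B k}
      = C ∩ ⋂ k ∈ (Finset.univ : Finset (Fin r)), (E k)ᶜ := by
    ext x
    constructor
    · rintro ⟨h1, h2⟩
      refine ⟨h1, Set.mem_iInter₂.2 fun k _ => ?_⟩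
      intro hx
      obtain ⟨i, hi⟩ := h2 k
      exact hx i hi
    · rintro ⟨h1, h2⟩
      refine ⟨h1, fun k => ?_⟩
      have hk : x ∉ E k := Set.mem_iInter₂.1 h2 k (Finset.mem_univ k)
      by_contra hcon
      push_neg at hcon
      exact hk hcon
  have hterm : ∀ T ∈ (Finset.univ : Finset (Fin r)).powerset,
      (-1 : ℝ) ^ T.card * (μ (C ∩ ⋂ k ∈ T, E k)).toReal
        = (-1 : ℝ) ^ T.card * (1 - (q + T.card * p) / n) ^ n := by
    intro T _
    congr 1
    set D : Set M := A ∪ ⋃ k ∈ T, B k with hDdef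
    have hBU : MeasurableSet (⋃ k ∈ T, B k) :=
      T.measurableSet_biUnion fun k _ => hBmeas k
    have hDmeas : MeasurableSet D := hAmeas.union hBU
    have hset : C ∩ ⋂ k ∈ T, E k = {x : Fin n → M | ∀ i, x i ∉ D} := by
      ext x
      constructor
      · rintro ⟨h1, h2⟩ i hi
        rcases Set.mem_union _ _ _ |>.1 hi with hiA | hiB
        · exact h1 i hiA
        · obtain ⟨k, hkT, hik⟩ := Set.mem_iUnion₂.1 hiB
          exact Set.mem_iInter₂.1 h2 k hkT i hik
      · intro h
        refine ⟨fun i hiA => h i (Or.inl hiA), Set.mem_iInter₂.2 fun k hk => ?_⟩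
        exact fun i hik => h i (Or.inr (Set.mem_iUnion₂.2 ⟨k, hk, hik⟩))
    have hsum : ν (⋃ k ∈ T, B k) = ∑ k ∈ T, ν (B k) :=
      measure_biUnion_finset (fun k _ k' _ hkk' => hBdisj hkk') fun k _ => hBmeas k
    have hdisj : Disjoint A (⋃ k ∈ T, B k) := by
      simp only [Set.disjoint_iUnion_right]
      exact fun k _ => hABdisj k
    have hqn : (0:ℝ) ≤ q / n := le_of_lt (div_pos hq hn')
    have hpn : (0:ℝ) ≤ p / n := le_of_lt (div_pos hp hn')
    have hνD : ν D = ENNReal.ofReal (q / n + T.card * (p / n)) := by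
      rw [hDdef, measure_union hdisj hBU, hAq, hsum]
      have : ∑ k ∈ T, ν (B k) = ENNReal.ofReal (T.card * (p / n)) := by
        simp only [hBp]
        rw [Finset.sum_const, nsmul_eq_mul, ← ENNReal.ofReal_natCast (T.card),
          ← ENNReal.ofReal_mul (by positivity)]
      rw [this, ← ENNReal.ofReal_add hqn (by positivity)]
    have hle : ν D ≤ 1 := prob_le_one
    have hle' : q / n + T.card * (p / n) ≤ 1 := by
      rw [hνD, ENNReal.ofReal_le_one] at hle
      exact hle
    have hcompl : (ν Dᶜ).toReal = 1 - (q / n + T.card * (p / n)) := by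
      rw [prob_compl_eq_one_sub hDmeas, ENNReal.toReal_sub_of_le (hνD ▸ hle) ENNReal.one_ne_top,
        hνD, ENNReal.toReal_ofReal (by positivity)]
      simp
    rw [hset, avoid_measure, ENNReal.toReal_pow, hcompl]
    congr 1
    rw [add_div]
    ring
  rw [hev, ie_aux μ E hE Finset.univ C hC, Finset.sum_congr rfl hterm]
  rw [Finset.sum_powerset_apply_card (fun m => (-1 : ℝ) ^ m * (1 - (q + m * p) / n) ^ n)]
  rw [Finset.card_univ, Fintype.card_fin]
  refine Finset.sum_congr rfl fun k _ => ?_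
  rw [nsmul_eq_mul]
  ring

/-- exact probability of an `n,p,q,r`-uniform occupancy indicator by
inclusion–exclusion, and its limit `e^{−q}(1 − e^{−p})^r` as `n → ∞`.  For each `n`,
the indicator is built from a set `A n` of measure `q/n` and `r` pairwise disjoint
sets `B n k` of measure `p/n`, all disjoint from `A n`; the event is that the `n`
i.i.d. samples from `ν n` avoid `A n` and hit every `B n k`. -/
theorem stmt9 {M : Type*} [MeasurableSpace M]
    (r : ℕ) (p q : ℝ) (hp : 0 < p) (hp1 : p < 1) (hq : 0 < q) (hq1 : q < 1)
    (ν : ℕ → Measure M) [∀ n, IsProbabilityMeasure (ν n)]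
    (A : ℕ → Set M) (B : ℕ → Fin r → Set M)
    (hAmeas : ∀ n, MeasurableSet (A n))
    (hBmeas : ∀ n k, MeasurableSet (B n k))
    (hAq : ∀ n : ℕ, 0 < n → ν n (A n) = ENNReal.ofReal (q / n))
    (hBp : ∀ n : ℕ, 0 < n → ∀ k, ν n (B n k) = ENNReal.ofReal (p / n))
    (hABdisj : ∀ n k, Disjoint (A n) (B n k))
    (hBdisj : ∀ n, Pairwise fun k k' => Disjoint (B n k) (B n k')) :
    (∀ n : ℕ, 0 < n →
      ((Measure.pi fun _ : Fin n => ν n)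
          {x : Fin n → M | (∀ i, x i ∉ A n) ∧ ∀ k, ∃ i, x i ∈ B n k}).toReal =
        (1 - q / n) ^ n *
          ∑ k ∈ Finset.range (r + 1),
            (-1 : ℝ) ^ k * (r.choose k) * (1 - (k * (p / n)) / (1 - q / n)) ^ n) ∧
    Tendsto (fun n : ℕ =>
        ((Measure.pi fun _ : Fin n => ν n)
          {x : Fin n → M | (∀ i, x i ∉ A n) ∧ ∀ k, ∃ i, x i ∈ B n k}).toReal)
      atTop (nhds (Real.exp (-q) * (1 - Real.exp (-p)) ^ r)) := by
  have hkey : ∀ n : ℕ, 0 < n →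
      ((Measure.pi fun _ : Fin n => ν n)
          {x : Fin n → M | (∀ i, x i ∉ A n) ∧ ∀ k, ∃ i, x i ∈ B n k}).toReal =
        ∑ k ∈ Finset.range (r + 1),
          (-1 : ℝ) ^ k * (r.choose k) * (1 - (q + k * p) / n) ^ n := fun n hn =>
    key r p q hp hq (ν n) (A n) (B n) (hAmeas n) (hBmeas n) n hn (hAq n hn)
      (hBp n hn) (hABdisj n) (hBdisj n)
  have hfac : ∀ n : ℕ, 0 < n →
      ∑ k ∈ Finset.range (r + 1), (-1 : ℝ) ^ k * (r.choose k) * (1 - (q + k * p) / n) ^ n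
        = (1 - q / n) ^ n *
          ∑ k ∈ Finset.range (r + 1),
            (-1 : ℝ) ^ k * (r.choose k) * (1 - (k * (p / n)) / (1 - q / n)) ^ n := by
    intro n hn
    have hn' : (0:ℝ) < n := by exact_mod_cast hn
    have h1n : (1:ℝ) ≤ n := by exact_mod_cast hn
    have hqn1 : q / n < 1 := (div_lt_one hn').mpr (lt_of_lt_of_le hq1 h1n)
    have hne : (1:ℝ) - q / n ≠ 0 := by linarith
    rw [Finset.mul_sum]
    refine Finset.sum_congr rfl fun k _ => ?_
    rw [show (1:ℝ) - (q + k * p) / n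
        = (1 - q / n) * (1 - (k * (p / n)) / (1 - q / n)) by
      rw [mul_sub, mul_one, mul_div_assoc', mul_div_cancel_left₀ _ hne, add_div]; ring]
    rw [mul_pow]
    ring
  constructor
  · intro n hn
    rw [hkey n hn, hfac n hn]
  · have hval : ∑ k ∈ Finset.range (r + 1),
        (-1 : ℝ) ^ k * (r.choose k) * Real.exp (-(q + k * p))
        = Real.exp (-q) * (1 - Real.exp (-p)) ^ r := by
      rw [show (1:ℝ) - Real.exp (-p) = -Real.exp (-p) + 1 by ring, add_pow, Finset.mul_sum]
      refine Finset.sum_congr rfl fun k _ => ?_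
      rw [show -(q + (k:ℝ) * p) = -q + (k:ℝ) * (-p) by ring, Real.exp_add,
        Real.exp_nat_mul, neg_pow]
      ring
    rw [← hval]
    have hlim : Tendsto (fun n : ℕ => ∑ k ∈ Finset.range (r + 1),
        (-1 : ℝ) ^ k * (r.choose k) * (1 + (-(q + k * p)) / n) ^ n) atTop
        (nhds (∑ k ∈ Finset.range (r + 1),
          (-1 : ℝ) ^ k * (r.choose k) * Real.exp (-(q + k * p)))) :=
      tendsto_finset_sum _ fun k _ =>
        (Real.tendsto_one_add_div_pow_exp (-(q + k * p))).const_mul _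
    refine hlim.congr' ?_
    filter_upwards [eventually_gt_atTop 0] with n hn
    rw [hkey n hn]
    refine Finset.sum_congr rfl fun k _ => ?_
    rw [neg_div, ← sub_eq_add_neg]
end

section
/- Let μ be a d-Ahlfors regular measure on a metric space M with constant c, let r > 0 be small, and let B be a ball of radius 2r centered at y ∈ supp μ. Define ω(B, x) = 1 if the finite sample x intersects B_r(y) but not B_{2r}(y) \\ B_r(y). If ℬ is any collection of disjoint balls of radius 2r centered at points of supp μ and x is a finite subset of supp μ, then the number of minimum spanning tree edges of x of length greater than r satisfies p(x, r) ≥ (∑_{B ∈ ℬ} ω(B, x)) − 1. -/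
open MeasureTheory

open Metric Finset

variable {X : Type*}

open SimpleGraph in
private lemma reach_of_delete {V : Type*} {G : SimpleGraph V} {a b : V}
    (hre : (G \ SimpleGraph.fromEdgeSet {s(a, b)}).Reachable a b) :
    ∀ {u w : V}, G.Reachable u w →
      (G \ SimpleGraph.fromEdgeSet {s(a, b)}).Reachable u w := by
  intro u w h
  obtain ⟨p⟩ := h
  induction p with
  | nil => exact Reachable.refl _
  | @cons u v w h p ih =>
    refine Reachable.trans ?_ ih
    by_cases he : s(u, v) = s(a, b)
    · rw [Sym2.eq_iff] at he
      rcases he with ⟨rfl, rfl⟩ | ⟨rfl, rfl⟩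
      · exact hre
      · exact hre.symm
    · refine SimpleGraph.Adj.reachable ?_
      rw [SimpleGraph.sdiff_adj]
      exact ⟨h, by simp [SimpleGraph.fromEdgeSet_adj, he]⟩

open SimpleGraph in
private lemma conn_card_le {V : Type*} [Fintype V] :
    ∀ (n : ℕ) (G : SimpleGraph V), G.edgeSet.ncard ≤ n → G.Connected →
      Fintype.card V ≤ n + 1 := by
  classical
  intro n
  induction n with
  | zero =>
    intro G hcard hconn
    by_cases hac : G.IsAcyclic
    · haveI : Fintype G.edgeSet := Set.Finite.fintype (Set.toFinite _)
      have h1 := SimpleGraph.IsTree.card_edgeFinset ⟨hconn, hac⟩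
      have h2 : G.edgeSet.ncard = G.edgeFinset.card := by
        rw [← Set.ncard_coe_finset, SimpleGraph.coe_edgeFinset]
      omega
    · exfalso
      simp only [SimpleGraph.IsAcyclic, not_forall, not_not] at hac
      obtain ⟨v, c, hc⟩ := hac
      have hne : c.edges ≠ [] := by
        have h3 := hc.three_le_length
        intro h
        rw [← SimpleGraph.Walk.length_edges, h] at h3
        simp at h3
      obtain ⟨e, he⟩ := List.exists_mem_of_ne_nil _ hne
      have hmem : e ∈ G.edgeSet := c.edges_subset_edgeSet he
      have : G.edgeSet = ∅ := (Set.ncard_eq_zero (Set.toFinite _)).mp (Nat.le_zero.mp hcard)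
      rw [this] at hmem
      exact hmem
  | succ n ih =>
    intro G hcard hconn
    by_cases hac : G.IsAcyclic
    · haveI : Fintype G.edgeSet := Set.Finite.fintype (Set.toFinite _)
      have h1 := SimpleGraph.IsTree.card_edgeFinset ⟨hconn, hac⟩
      have h2 : G.edgeSet.ncard = G.edgeFinset.card := by
        rw [← Set.ncard_coe_finset, SimpleGraph.coe_edgeFinset]
      omega
    · simp only [SimpleGraph.IsAcyclic, not_forall, not_not] at hac
      obtain ⟨v, c, hc⟩ := hac
      have hne : c.edges ≠ [] := by
        have h3 := hc.three_le_length
        intro h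
        rw [← SimpleGraph.Walk.length_edges, h] at h3
        simp at h3
      obtain ⟨e, he⟩ := List.exists_mem_of_ne_nil _ hne
      revert he
      induction e using Sym2.ind with
      | _ a b =>
        intro he
        have hmem : s(a, b) ∈ G.edgeSet := c.edges_subset_edgeSet he
        have hreach : (G \ SimpleGraph.fromEdgeSet {s(a, b)}).Reachable a b :=
          (SimpleGraph.adj_and_reachable_delete_edges_iff_exists_cycle.mpr ⟨v, c, hc, he⟩).2
        set H := G \ SimpleGraph.fromEdgeSet {s(a, b)} with hH
        have hHconn : H.Connected := by
          haveI := hconn.nonempty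
          exact SimpleGraph.Connected.mk
            (fun u w => reach_of_delete hreach (hconn.preconnected u w))
        have hE : H.edgeSet = G.edgeSet \ {s(a, b)} := by
          rw [hH]
          rw [SimpleGraph.edgeSet_sdiff, SimpleGraph.edgeSet_fromEdgeSet,
            SimpleGraph.edgeSet_sdiff_sdiff_isDiag]
        have hcard' : H.edgeSet.ncard ≤ n := by
          rw [hE, Set.ncard_diff_singleton_of_mem hmem]
          have hpos : 0 < G.edgeSet.ncard :=
            (Set.ncard_pos (Set.toFinite _)).mpr ⟨_, hmem⟩
          omega
        have := ih H hcard' hHconn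
        omega

private lemma main_aux [MetricSpace X] (r : ℝ) (hr : 0 < r) (centers : Finset X)
    (hdisj : ((centers : Set X)).Pairwise fun u v =>
      Disjoint (ball u (2 * r)) (ball v (2 * r)))
    (x : Finset X) (T : Finset (X × X)) (hconn : (edgesGraph x T).Connected) :
    {y : X | y ∈ centers ∧ (∃ z ∈ x, z ∈ ball y r) ∧
        ∀ z ∈ x, z ∈ ball y (2 * r) → z ∈ ball y r}.ncard ≤
      (T.filter fun e => r < dist e.1 e.2).card + 1 := by
  classical
  set S := {y : X | y ∈ centers ∧ (∃ z ∈ x, z ∈ ball y r) ∧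
      ∀ z ∈ x, z ∈ ball y (2 * r) → z ∈ ball y r} with hS
  set G := edgesGraph x T with hG
  set G' : SimpleGraph {z // z ∈ x} :=
    SimpleGraph.fromRel (fun a b => ((a : X), (b : X)) ∈ T ∧ dist (a : X) (b : X) ≤ r) with hG'
  set f := G'.connectedComponentMk with hf
  haveI hfin : Finite G'.ConnectedComponent := Quot.finite _
  haveI : Fintype G'.ConnectedComponent := Fintype.ofFinite _
  set Qg : SimpleGraph G'.ConnectedComponent := SimpleGraph.fromRel
    (fun q1 q2 => ∃ a b : {z // z ∈ x},
      f a = q1 ∧ f b = q2 ∧ G.Adj a b ∧ r < dist (a : X) (b : X)) with hQg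
  obtain ⟨⟨z₀, hz₀⟩⟩ := hconn.nonempty
  -- short edges stay in the same component
  have hshort : ∀ a b : {z // z ∈ x}, G.Adj a b → dist (a : X) (b : X) ≤ r → f a = f b := by
    intro a b hab hd
    rw [hG] at hab
    simp only [edgesGraph, SimpleGraph.fromRel_adj] at hab
    rw [hf]
    apply SimpleGraph.ConnectedComponent.eq.mpr
    apply SimpleGraph.Adj.reachable
    rw [hG', SimpleGraph.fromRel_adj]
    exact ⟨hab.1, hab.2.imp (fun h => ⟨h, hd⟩) (fun h => ⟨h, by rwa [dist_comm]⟩)⟩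
  have hstep : ∀ a b : {z // z ∈ x}, G.Adj a b → Qg.Reachable (f a) (f b) := by
    intro a b hab
    by_cases heq : f a = f b
    · rw [heq]
    · have hd : r < dist (a : X) (b : X) := by
        by_contra hle
        exact heq (hshort a b hab (not_lt.mp hle))
      apply SimpleGraph.Adj.reachable
      rw [hQg, SimpleGraph.fromRel_adj]
      exact ⟨heq, Or.inl ⟨a, b, rfl, rfl, hab, hd⟩⟩
  have hwalk : ∀ {a b : {z // z ∈ x}}, G.Walk a b → Qg.Reachable (f a) (f b) := by
    intro a b p
    induction p with
    | nil => exact SimpleGraph.Reachable.refl _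
    | @cons a c b h p ih => exact SimpleGraph.Reachable.trans (hstep a c h) ih
  have hQconn : Qg.Connected := by
    haveI : Nonempty G'.ConnectedComponent := ⟨f ⟨z₀, hz₀⟩⟩
    refine SimpleGraph.Connected.mk ?_
    intro q1 q2
    induction q1 using SimpleGraph.ConnectedComponent.ind with
    | _ a =>
      induction q2 using SimpleGraph.ConnectedComponent.ind with
      | _ b =>
        obtain ⟨p⟩ := hconn.preconnected a b
        exact hwalk p
  -- every edge of Qg comes from a long edge of T
  have hlongwit : ∀ a b : {z // z ∈ x}, G.Adj a b → r < dist (a : X) (b : X) →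
      ∃ e ∈ T.filter (fun e => r < dist e.1 e.2), ∃ (h1 : e.1 ∈ x) (h2 : e.2 ∈ x),
        s(f a, f b) = s(f ⟨e.1, h1⟩, f ⟨e.2, h2⟩) := by
    intro a b hab hd
    rw [hG] at hab
    simp only [edgesGraph, SimpleGraph.fromRel_adj] at hab
    obtain ⟨hne, h | h⟩ := hab
    · exact ⟨((a : X), (b : X)), Finset.mem_filter.mpr ⟨h, hd⟩, a.2, b.2,
        by rw [Subtype.coe_eta, Subtype.coe_eta]⟩
    · exact ⟨((b : X), (a : X)), Finset.mem_filter.mpr ⟨h, by rwa [dist_comm] at hd⟩, b.2, a.2,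
        by rw [Subtype.coe_eta, Subtype.coe_eta, Sym2.eq_swap]⟩
  have hwitE : ∀ ε ∈ Qg.edgeSet, ∃ e ∈ T.filter (fun e => r < dist e.1 e.2),
      ∃ (h1 : e.1 ∈ x) (h2 : e.2 ∈ x), ε = s(f ⟨e.1, h1⟩, f ⟨e.2, h2⟩) := by
    intro ε
    induction ε using Sym2.ind with
    | _ q1 q2 =>
      intro hε
      rw [SimpleGraph.mem_edgeSet, hQg, SimpleGraph.fromRel_adj] at hε
      obtain ⟨hne, ⟨a, b, rfl, rfl, hab, hd⟩ | ⟨a, b, rfl, rfl, hab, hd⟩⟩ := hε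
      · exact hlongwit a b hab hd
      · obtain ⟨e, he, h1, h2, hs⟩ := hlongwit a b hab hd
        exact ⟨e, he, h1, h2, by rw [Sym2.eq_swap, hs]⟩
  have hcongr : ∀ (e e' : X × X) (h1 : e.1 ∈ x) (h2 : e.2 ∈ x) (h1' : e'.1 ∈ x)
      (h2' : e'.2 ∈ x), e = e' →
      s(f ⟨e.1, h1⟩, f ⟨e.2, h2⟩) = s(f ⟨e'.1, h1'⟩, f ⟨e'.2, h2'⟩) := by
    rintro e e' h1 h2 h1' h2' rfl; rfl
  have hQL : Qg.edgeSet.ncard ≤ (T.filter fun e => r < dist e.1 e.2).card := by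
    set g : Sym2 G'.ConnectedComponent → X × X := fun ε =>
      if h : ε ∈ Qg.edgeSet then (hwitE ε h).choose else (z₀, z₀) with hg
    have hmapsto : ∀ ε ∈ Qg.edgeSet,
        g ε ∈ ((T.filter fun e => r < dist e.1 e.2) : Set (X × X)) := by
      intro ε hε
      rw [hg]
      simp only [dif_pos hε]
      exact Finset.mem_coe.mpr (hwitE ε hε).choose_spec.1
    have hinj : Set.InjOn g Qg.edgeSet := by
      intro ε1 h1 ε2 h2 hgeq
      rw [hg] at hgeq
      simp only [dif_pos h1, dif_pos h2] at hgeq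
      obtain ⟨ha1, hb1, he1⟩ := (hwitE ε1 h1).choose_spec.2
      obtain ⟨ha2, hb2, he2⟩ := (hwitE ε2 h2).choose_spec.2
      rw [he1, he2]
      exact hcongr _ _ _ _ _ _ hgeq
    have := Set.ncard_le_ncard_of_injOn g hmapsto hinj (Finset.finite_toSet _)
    rwa [Set.ncard_coe_finset] at this
  -- clusters are closed under short walks
  have hcluster : ∀ y ∈ S, ∀ {a b : {z // z ∈ x}}, G'.Walk a b →
      (a : X) ∈ ball y r → (b : X) ∈ ball y r := by
    intro y hy a b p
    induction p with
    | nil => exact id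
    | @cons a c b hadj p ih =>
      intro ha
      apply ih
      have hd : dist (a : X) (c : X) ≤ r := by
        rw [hG', SimpleGraph.fromRel_adj] at hadj
        rcases hadj.2 with ⟨-, hd⟩ | ⟨-, hd⟩
        · exact hd
        · rwa [dist_comm]
      have h2 : (c : X) ∈ ball y (2 * r) := by
        rw [mem_ball] at ha ⊢
        calc dist (c : X) y ≤ dist (c : X) (a : X) + dist (a : X) y := dist_triangle _ _ _
          _ < r + r := add_lt_add_of_le_of_lt (by rwa [dist_comm]) ha
          _ = 2 * r := by ring
      exact hy.2.2 (c : X) c.2 h2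
  -- good centers inject into components
  have hSQ : S.ncard ≤ Fintype.card G'.ConnectedComponent := by
    have hwit2 : ∀ y ∈ S, ∃ z : {z // z ∈ x}, (z : X) ∈ ball y r := by
      intro y hy
      obtain ⟨z, hz, hzb⟩ := hy.2.1
      exact ⟨⟨z, hz⟩, hzb⟩
    set ψ : X → G'.ConnectedComponent := fun y =>
      if h : y ∈ S then f (hwit2 y h).choose else f ⟨z₀, hz₀⟩ with hψ
    have hinj : Set.InjOn ψ S := by
      intro y1 h1 y2 h2 heq
      by_contra hne
      rw [hψ] at heq
      simp only [dif_pos h1, dif_pos h2] at heq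
      rw [hf] at heq
      obtain ⟨p⟩ := SimpleGraph.ConnectedComponent.eq.mp heq
      have hz2y1 : ((hwit2 y2 h2).choose : X) ∈ ball y1 r :=
        hcluster y1 h1 p (hwit2 y1 h1).choose_spec
      have hz2y2 := (hwit2 y2 h2).choose_spec
      have hdj := hdisj (Finset.mem_coe.mpr h1.1) (Finset.mem_coe.mpr h2.1) hne
      exact Set.disjoint_left.mp hdj (ball_subset_ball (by linarith) hz2y1)
        (ball_subset_ball (by linarith) hz2y2)
    have := Set.ncard_le_ncard_of_injOn ψ (fun y _ => Set.mem_univ (ψ y)) hinj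
      Set.finite_univ
    rwa [Set.ncard_univ, Nat.card_eq_fintype_card] at this
  have hcomp := conn_card_le Qg.edgeSet.ncard Qg le_rfl hQconn
  omega

/-- if `ℬ` is a family of pairwise disjoint balls of radius `2r` centered
at points of the support of a `d`-Ahlfors regular measure (here the whole space), then
the number of MST edges of a finite subset `x` of length greater than `r` is at least
`∑_{B ∈ ℬ} ω(B, x) − 1`, where `ω(B,x) = 1` iff `x` meets `B_r(y)` but not the annulus
`B_{2r}(y) ∖ B_r(y)`. -/
theorem stmt10 [MetricSpace X] [MeasurableSpace X] [BorelSpace X]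
    (μ : Measure X) [IsProbabilityMeasure μ]
    (d c δ₀ : ℝ) (hc : 0 < c) (hd : 0 < d) (hδ₀ : 0 < δ₀)
    (hreg : ∀ (y : X) (δ : ℝ), 0 < δ → δ < δ₀ →
      ENNReal.ofReal ((1 / c) * δ ^ d) ≤ μ (ball y δ) ∧
      μ (ball y δ) ≤ ENNReal.ofReal (c * δ ^ d))
    (r : ℝ) (hr : 0 < r)
    (centers : Finset X)
    (hdisj : ((centers : Set X)).Pairwise fun u v =>
      Disjoint (ball u (2 * r)) (ball v (2 * r)))
    (x : Finset X) (T : Finset (X × X)) (hT : IsMST x T) :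
    ({y : X | y ∈ centers ∧ (∃ z ∈ x, z ∈ ball y r) ∧
        ∀ z ∈ x, z ∈ ball y (2 * r) → z ∈ ball y r}.ncard : ℝ) - 1 ≤
      ((T.filter fun e => r < dist e.1 e.2).card : ℝ) := by
  have key := main_aux r hr centers hdisj x T hT.1.2.1
  have key' : ({y : X | y ∈ centers ∧ (∃ z ∈ x, z ∈ ball y r) ∧
      ∀ z ∈ x, z ∈ ball y (2 * r) → z ∈ ball y r}.ncard : ℝ) ≤
      ((T.filter fun e => r < dist e.1 e.2).card : ℝ) + 1 := by
    exact_mod_cast key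
  linarith
end

section
/- Let μ be a probability measure on a bounded metric space X and suppose there are d > α > 0, A₁ > 0 and ε₀ ∈ (0,1) with p_i(X, ε) ≤ A₁ ε^{−d} log(1/ε) for all ε < ε₀. Then there exist A₂ > 0 and ε₁ > 0 such that F^i_α(X, ε) = ∑_{I ∈ PH_i(X), |I| > ε} |I|^α ≤ A₂ ε^{α−d} log(1/ε) for all ε < ε₁. -/
open MeasureTheory Metric

/-- An abstract barcode: a type indexing the persistence intervals together with the
length of each interval. -/
structure Barcode where
  ι : Type
  len : ι → ℝ

/-- `F^i_α(X, ε)`: the `α`-weighted sum (in `ℝ≥0∞`) of the lengths of the barcode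
intervals of length greater than `ε`. -/
noncomputable def Barcode.F (bc : Barcode) (α ε : ℝ) : ENNReal :=
  ∑' I : {I : bc.ι // ε < bc.len I}, ENNReal.ofReal (bc.len I.1 ^ α)

/-- `p_i(X, ε)`: the number of barcode intervals of length greater than `ε`. -/
noncomputable def Barcode.count (bc : Barcode) (ε : ℝ) : ℕ :=
  Nat.card {I : bc.ι // ε < bc.len I}

/-- Bottleneck stability for an assignment of barcodes (`i`-dimensional persistent
homology of the Čech or Vietoris–Rips filtration) to subsets of a metric space `M`:
if `d_H(X, Y) < δ` there is an injection of the intervals of `PH_i(X)` of length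
`> 2δ` into those of `PH_i(Y)` moving each endpoint by less than `δ` (so changing
each length by less than `2δ`). -/
def StableFamily {M : Type*} [MetricSpace M] (bc : Set M → Barcode) : Prop :=
  ∀ (X Y : Set M) (δ : ℝ), 0 < δ → Metric.hausdorffDist X Y < δ →
    ∃ η : {I : (bc X).ι // 2 * δ < (bc X).len I} → (bc Y).ι,
      Function.Injective η ∧
      ∀ I, |(bc X).len I.1 - (bc Y).len (η I)| < 2 * δ

lemma card_le_count (bc : Barcode) {ε : ℝ} (s : Finset {I : bc.ι // ε < bc.len I})
    (t : ℝ) (hfin : Finite {I : bc.ι // t < bc.len I})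
    (h : ∀ I ∈ s, t < bc.len I.1) : s.card ≤ bc.count t := by
  haveI := hfin
  rw [Barcode.count, ← Nat.card_eq_finsetCard s]
  exact Nat.card_le_card_of_injective
    (fun x : ↥s => (⟨x.1.1, h x.1 x.2⟩ : {I : bc.ι // t < bc.len I}))
    (by intro a b hab
        simp only [Subtype.mk.injEq] at hab
        exact Subtype.ext (Subtype.ext hab))


set_option maxHeartbeats 1600000 in
/-- if the bounded metric space `M` (supporting a probability measure
`μ`) satisfies `p_i(X, ε) ≤ A₁ ε^{-d} log(1/ε)` for `ε < ε₀ < 1`, then for `0 < α < d`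
there are `A₂ > 0` and `ε₁ > 0` with `F^i_α(X, ε) ≤ A₂ ε^{α-d} log(1/ε)` for `ε < ε₁`.
Here `X = univ`, and every persistence interval has length at most the diameter. -/
theorem stmt14 {M : Type*} [MetricSpace M] [MeasurableSpace M] [BorelSpace M]
    (bc : Set M → Barcode)
    (μ : Measure M) [IsProbabilityMeasure μ]
    (hbdd : Bornology.IsBounded (Set.univ : Set M))
    (hlen : ∀ I : (bc Set.univ).ι,
      (bc Set.univ).len I ≤ Metric.diam (Set.univ : Set M))
    (d α : ℝ) (hα : 0 < α) (hαd : α < d)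
    (A₁ ε₀ : ℝ) (hA₁ : 0 < A₁) (hε₀ : 0 < ε₀) (hε₀1 : ε₀ < 1)
    (hcount : ∀ ε : ℝ, 0 < ε → ε < ε₀ →
      Finite {I : (bc Set.univ).ι // ε < (bc Set.univ).len I} ∧
      ((bc Set.univ).count ε : ℝ) ≤ A₁ * ε ^ (-d) * Real.log (1 / ε)) :
    ∃ A₂ : ℝ, 0 < A₂ ∧ ∃ ε₁ : ℝ, 0 < ε₁ ∧ ∀ ε : ℝ, 0 < ε → ε < ε₁ →
      (bc Set.univ).F α ε ≤
        ENNReal.ofReal (A₂ * ε ^ (α - d) * Real.log (1 / ε)) := by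

  classical
  set D := Metric.diam (Set.univ : Set M) with hDdef
  set len := (bc Set.univ).len with hlendef
  set Dα : ℝ := (max D 1) ^ α with hDαdef
  have hDα1 : 1 ≤ Dα := Real.one_le_rpow (le_max_right _ _) hα.le
  set r : ℝ := (2:ℝ) ^ (α - d) with hrdef
  have hr0 : 0 < r := Real.rpow_pos_of_pos two_pos _
  have hr1 : r < 1 := Real.rpow_lt_one_of_one_lt_of_neg one_lt_two (by linarith)
  have h2α : (0:ℝ) < (2:ℝ) ^ α := Real.rpow_pos_of_pos two_pos _
  have hε₀2 : 0 < ε₀ / 2 := by linarith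
  have hε₀2' : ε₀ / 2 < ε₀ := by linarith
  obtain ⟨hfin₀, hcnt₀⟩ := hcount (ε₀ / 2) hε₀2 hε₀2'
  set C₀ : ℝ := ((bc Set.univ).count (ε₀ / 2) : ℝ) with hC₀def
  have hC₀ : 0 ≤ C₀ := Nat.cast_nonneg _
  set G : ℝ := A₁ * 2 ^ α / (1 - r) with hGdef
  have hG : 0 < G := div_pos (mul_pos hA₁ h2α) (by linarith)
  refine ⟨G + C₀ * Dα, by nlinarith, min (ε₀ / 2) (Real.exp (-1)),
    lt_min hε₀2 (Real.exp_pos _), ?_⟩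
  intro ε hε hεlt
  have hεε₀ : ε < ε₀ / 2 := lt_of_lt_of_le hεlt (min_le_left _ _)
  have hεe : ε < Real.exp (-1) := lt_of_lt_of_le hεlt (min_le_right _ _)
  have hε1 : ε < 1 := hεe.trans (by rw [Real.exp_lt_one_iff]; norm_num)
  have hlog : 1 ≤ Real.log (1 / ε) := by
    rw [Real.le_log_iff_exp_le (by positivity)]
    rw [Real.exp_neg] at hεe
    rw [le_div_iff₀ hε]
    have he1 := Real.exp_pos 1
    calc Real.exp 1 * ε ≤ Real.exp 1 * (Real.exp 1)⁻¹ :=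
          mul_le_mul_of_nonneg_left hεe.le he1.le
      _ = 1 := mul_inv_cancel₀ (ne_of_gt he1)
  have hεad : 1 ≤ ε ^ (α - d) :=
    Real.one_le_rpow_of_pos_of_le_one_of_nonpos hε hε1.le (by linarith)
  -- finiteness of the index set
  obtain ⟨hfinS, -⟩ := hcount ε hε (hεε₀.trans hε₀2')
  haveI := hfinS
  haveI : Fintype {I : (bc Set.univ).ι // ε < len I} := Fintype.ofFinite _
  set S := {I : (bc Set.univ).ι // ε < len I}
  set f : S → ℝ := fun I => len I.1 ^ α with hfdef
  have hfnonneg : ∀ I : S, 0 ≤ f I := fun I =>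
    Real.rpow_nonneg (le_of_lt (hε.trans I.2)) _
  have hF : (bc Set.univ).F α ε = ENNReal.ofReal (∑ I : S, f I) := by
    rw [Barcode.F, tsum_fintype, ENNReal.ofReal_sum_of_nonneg (fun I _ => hfnonneg I)]
  rw [hF]
  apply ENNReal.ofReal_le_ofReal
  -- choose K
  obtain ⟨K, hK⟩ := pow_unbounded_of_one_lt (ε₀ / (2 * ε)) (one_lt_two (α := ℝ))
  have hK' : ε₀ / 2 < 2 ^ K * ε := by
    rw [div_lt_iff₀ (by positivity)] at hK
    nlinarith
  -- buckets
  set B : ℕ → Finset S := fun k => Finset.univ.filter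
    (fun I => 2 ^ k * ε < len I.1 ∧ len I.1 ≤ 2 ^ (k + 1) * ε ∧ len I.1 ≤ ε₀ / 2)
    with hBdef
  set big : Finset S := Finset.univ.filter (fun I => ε₀ / 2 < len I.1) with hbigdef
  have hcover : (Finset.univ : Finset S) ⊆ big ∪ (Finset.range (K + 1)).biUnion B := by
    intro I _
    by_cases hbig : ε₀ / 2 < len I.1
    · exact Finset.mem_union_left _ (Finset.mem_filter.2 ⟨Finset.mem_univ _, hbig⟩)
    · push_neg at hbig
      have h2K : (2:ℝ) ^ K * ε ≤ 2 ^ (K + 1) * ε := by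
        have : (2:ℝ) ^ K ≤ 2 ^ (K + 1) := pow_le_pow_right₀ one_le_two (Nat.le_succ K)
        nlinarith
      have hP : ∃ n, len I.1 ≤ 2 ^ (n + 1) * ε := ⟨K, hbig.trans (hK'.le.trans h2K)⟩
      have hk1 : len I.1 ≤ 2 ^ (Nat.find hP + 1) * ε := Nat.find_spec hP
      have hk2 : 2 ^ (Nat.find hP) * ε < len I.1 := by
        rcases Nat.eq_zero_or_pos (Nat.find hP) with h0 | h0
        · rw [h0]; simpa using I.2
        · have hmin := Nat.find_min hP (Nat.sub_lt h0 one_pos)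
          push_neg at hmin
          have heq : Nat.find hP - 1 + 1 = Nat.find hP := Nat.succ_pred_eq_of_pos h0
          rwa [heq] at hmin
      have hkK : Nat.find hP < K + 1 :=
        Nat.lt_succ_of_le (Nat.find_le (hbig.trans (hK'.le.trans h2K)))
      refine Finset.mem_union_right _ (Finset.mem_biUnion.2 ⟨Nat.find hP,
        Finset.mem_range.2 hkK, Finset.mem_filter.2 ⟨Finset.mem_univ _, hk2, hk1, hbig⟩⟩)
  have hdisj : Disjoint big ((Finset.range (K + 1)).biUnion B) := by
    rw [Finset.disjoint_left]
    intro I hI hI'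
    obtain ⟨k, -, hk⟩ := Finset.mem_biUnion.1 hI'
    have h1 := (Finset.mem_filter.1 hI).2
    have h2 := (Finset.mem_filter.1 hk).2.2.2
    linarith
  have hpair : (↑(Finset.range (K + 1)) : Set ℕ).PairwiseDisjoint B := by
    intro i _ j _ hij
    rw [Function.onFun, Finset.disjoint_left]
    intro I hI hJ
    obtain ⟨-, hi1, hi2, -⟩ := Finset.mem_filter.1 hI
    obtain ⟨-, hj1, hj2, -⟩ := Finset.mem_filter.1 hJ
    rcases lt_or_gt_of_ne hij with h | h
    · have h1 : (2:ℝ) ^ (i + 1) ≤ 2 ^ j := pow_le_pow_right₀ one_le_two (by omega)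
      have h2 : (2:ℝ) ^ (i + 1) * ε ≤ 2 ^ j * ε := mul_le_mul_of_nonneg_right h1 hε.le
      linarith
    · have h1 : (2:ℝ) ^ (j + 1) ≤ 2 ^ i := pow_le_pow_right₀ one_le_two (by omega)
      have h2 : (2:ℝ) ^ (j + 1) * ε ≤ 2 ^ i * ε := mul_le_mul_of_nonneg_right h1 hε.le
      linarith
  -- big bound
  have hbigsum : ∑ I ∈ big, f I ≤ C₀ * Dα := by
    have hb : ∀ I ∈ big, f I ≤ Dα := by
      intro I _
      exact Real.rpow_le_rpow (le_of_lt (hε.trans I.2))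
        ((hlen I.1).trans (le_max_left _ _)) hα.le
    calc ∑ I ∈ big, f I ≤ big.card • Dα := Finset.sum_le_card_nsmul _ _ _ hb
      _ = (big.card : ℝ) * Dα := nsmul_eq_mul _ _
      _ ≤ C₀ * Dα := by
          apply mul_le_mul_of_nonneg_right _ (by linarith)
          rw [hC₀def]
          exact_mod_cast card_le_count _ big (ε₀ / 2) hfin₀
            (fun I hI => (Finset.mem_filter.1 hI).2)
  -- bucket bound
  have hbucket : ∀ k ∈ Finset.range (K + 1),
      ∑ I ∈ B k, f I ≤ (A₁ * 2 ^ α * (ε ^ (α - d) * Real.log (1 / ε))) * r ^ k := by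
    intro k _
    have hterm0 : (0:ℝ) ≤ (A₁ * 2 ^ α * (ε ^ (α - d) * Real.log (1 / ε))) * r ^ k := by
      exact mul_nonneg (mul_nonneg (mul_nonneg hA₁.le h2α.le)
        (mul_nonneg (Real.rpow_pos_of_pos hε _).le (by linarith))) (pow_pos hr0 k).le
    rcases (B k).eq_empty_or_nonempty with hB | ⟨I₀, hI₀⟩
    · rw [hB, Finset.sum_empty]; exact hterm0
    · set t : ℝ := 2 ^ k * ε with htdef
      have ht : 0 < t := by positivity
      obtain ⟨-, hI₀1, -, hI₀3⟩ := Finset.mem_filter.1 hI₀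
      have htε₀2 : t < ε₀ / 2 := lt_of_lt_of_le hI₀1 hI₀3
      obtain ⟨hfint, hcntt⟩ := hcount t ht (htε₀2.trans hε₀2')
      have hcard : ((B k).card : ℝ) ≤ ((bc Set.univ).count t : ℝ) := by
        exact_mod_cast card_le_count _ (B k) t hfint
          (fun I hI => (Finset.mem_filter.1 hI).2.1)
      have hεt : ε ≤ t := by
        have h1 : (1:ℝ) ≤ 2 ^ k := one_le_pow₀ one_le_two
        calc ε = 1 * ε := (one_mul ε).symm
          _ ≤ 2 ^ k * ε := mul_le_mul_of_nonneg_right h1 hε.le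
      have hlogt : Real.log (1 / t) ≤ Real.log (1 / ε) :=
        Real.log_le_log (by positivity) (by
          apply one_div_le_one_div_of_le hε hεt)
      have hlogt0 : 0 ≤ Real.log (1 / t) := by
        apply Real.log_nonneg
        rw [le_div_iff₀ ht, one_mul]
        linarith
      have hsum1 : ∑ I ∈ B k, f I ≤ ((B k).card : ℝ) * (2 * t) ^ α := by
        have hb : ∀ I ∈ B k, f I ≤ (2 * t) ^ α := by
          intro I hI
          obtain ⟨-, h1, h2, -⟩ := Finset.mem_filter.1 hI
          apply Real.rpow_le_rpow (le_of_lt (hε.trans I.2)) _ hα.le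
          calc len I.1 ≤ 2 ^ (k + 1) * ε := h2
            _ = 2 * t := by rw [htdef]; ring
        calc ∑ I ∈ B k, f I ≤ (B k).card • ((2 * t) ^ α) :=
              Finset.sum_le_card_nsmul _ _ _ hb
          _ = ((B k).card : ℝ) * (2 * t) ^ α := nsmul_eq_mul _ _
      have h2t : (0:ℝ) < (2 * t) ^ α := Real.rpow_pos_of_pos (by linarith) _
      have hcnt' : ((bc Set.univ).count t : ℝ) ≤ A₁ * t ^ (-d) * Real.log (1 / ε) := by
        calc ((bc Set.univ).count t : ℝ) ≤ A₁ * t ^ (-d) * Real.log (1 / t) := hcntt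
          _ ≤ A₁ * t ^ (-d) * Real.log (1 / ε) := by
              apply mul_le_mul_of_nonneg_left hlogt
              positivity
      have hid : t ^ (-d) * (2 * t) ^ α = 2 ^ α * (r ^ k * ε ^ (α - d)) := by
        rw [Real.mul_rpow (by norm_num) ht.le]
        have h1 : t ^ (-d) * (2:ℝ) ^ α * t ^ α = 2 ^ α * t ^ (α - d) := by
          rw [mul_comm (t ^ (-d)) ((2:ℝ) ^ α), mul_assoc, ← Real.rpow_add ht]
          ring_nf
        have h2 : t ^ (α - d) = r ^ k * ε ^ (α - d) := by
          rw [htdef, Real.mul_rpow (by positivity) hε.le]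
          congr 1
          rw [hrdef, ← Real.rpow_natCast ((2:ℝ) ^ (α - d)) k,
            ← Real.rpow_natCast (2:ℝ) k, ← Real.rpow_mul (by norm_num),
            ← Real.rpow_mul (by norm_num), mul_comm]
        calc t ^ (-d) * ((2:ℝ) ^ α * t ^ α) = t ^ (-d) * (2:ℝ) ^ α * t ^ α := by ring
          _ = 2 ^ α * t ^ (α - d) := h1
          _ = 2 ^ α * (r ^ k * ε ^ (α - d)) := by rw [h2]
      calc ∑ I ∈ B k, f I ≤ ((B k).card : ℝ) * (2 * t) ^ α := hsum1
        _ ≤ ((bc Set.univ).count t : ℝ) * (2 * t) ^ α :=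
            mul_le_mul_of_nonneg_right hcard h2t.le
        _ ≤ (A₁ * t ^ (-d) * Real.log (1 / ε)) * (2 * t) ^ α :=
            mul_le_mul_of_nonneg_right hcnt' h2t.le
        _ = (A₁ * Real.log (1 / ε)) * (t ^ (-d) * (2 * t) ^ α) := by ring
        _ = (A₁ * 2 ^ α * (ε ^ (α - d) * Real.log (1 / ε))) * r ^ k := by
            rw [hid]; ring
  -- geometric sum
  have hgeom : ∑ k ∈ Finset.range (K + 1), r ^ k ≤ (1 - r)⁻¹ := by
    rw [← tsum_geometric_of_lt_one hr0.le hr1]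
    exact Summable.sum_le_tsum _ (fun i _ => (pow_pos hr0 i).le)
      (summable_geometric_of_lt_one hr0.le hr1)
  -- assemble
  set X : ℝ := ε ^ (α - d) * Real.log (1 / ε) with hXdef
  have hX1 : 1 ≤ X := by
    have h := mul_le_mul hεad hlog zero_le_one (by linarith : (0:ℝ) ≤ ε ^ (α - d))
    rw [hXdef]; linarith
  calc ∑ I : S, f I ≤ ∑ I ∈ big ∪ (Finset.range (K + 1)).biUnion B, f I :=
        Finset.sum_le_sum_of_subset_of_nonneg hcover (fun i _ _ => hfnonneg i)
    _ = ∑ I ∈ big, f I + ∑ I ∈ (Finset.range (K + 1)).biUnion B, f I :=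
        Finset.sum_union hdisj
    _ = ∑ I ∈ big, f I + ∑ k ∈ Finset.range (K + 1), ∑ I ∈ B k, f I := by
        rw [Finset.sum_biUnion hpair]
    _ ≤ C₀ * Dα + ∑ k ∈ Finset.range (K + 1),
          (A₁ * 2 ^ α * X) * r ^ k :=
        add_le_add hbigsum (Finset.sum_le_sum hbucket)
    _ = C₀ * Dα + (A₁ * 2 ^ α * X) * ∑ k ∈ Finset.range (K + 1), r ^ k := by
        rw [Finset.mul_sum]
    _ ≤ C₀ * Dα + (A₁ * 2 ^ α * X) * (1 - r)⁻¹ := by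
        apply add_le_add le_rfl
        apply mul_le_mul_of_nonneg_left hgeom
        exact mul_nonneg (mul_nonneg hA₁.le h2α.le) (by linarith)
    _ = C₀ * Dα + G * X := by rw [hGdef]; field_simp
    _ ≤ (G + C₀ * Dα) * ε ^ (α - d) * Real.log (1 / ε) := by
        have : (G + C₀ * Dα) * ε ^ (α - d) * Real.log (1 / ε) = (G + C₀ * Dα) * X := by
          rw [hXdef]; ring
        rw [this]
        have key : 0 ≤ C₀ * Dα * (X - 1) :=
          mul_nonneg (mul_nonneg hC₀ (by linarith)) (by linarith)
        nlinarith [key]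
end

section
/- Let ℐ and 𝒥 be finite collections of disjoint closed intervals in [0,1] with a natural map f : ℐ → 𝒥 (an order-preserving homeomorphism that restricts to a translation on each interval and maps intervals of ℐ onto intervals of 𝒥). Let 0 < α < d ≤ 1 and let μ be a probability measure supported on ⋃ℐ such that n^{−(d−α)/d} E^0_α(x_1,…,x_n) → c in probability, where x_1,…,x_n are i.i.d. from μ. Then n^{−(d−α)/d} E^0_α(f(x_1),…,f(x_n)) → c in probability. -/
open MeasureTheory Filter

/-- The `α`-weight `E⁰_α` of the minimum spanning tree of a finite sample of points
on the real line: the sum of the `α`-th powers of the gaps between consecutive points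
of the sorted sample. -/
noncomputable def Emst (α : ℝ) {n : ℕ} (x : Fin n → ℝ) : ℝ :=
  let l : List ℝ := Multiset.sort (Multiset.map x Finset.univ.val) (· ≤ ·)
  (List.zipWith (fun u v => (v - u) ^ α) l l.tail).sum

lemma sum_zipWith_sub (f g : ℝ → ℝ → ℝ) :
    ∀ (a b : List ℝ), (List.zipWith (fun u v => f u v - g u v) a b).sum
      = (List.zipWith f a b).sum - (List.zipWith g a b).sum := by
  intro a
  induction a with
  | nil => intro b; simp
  | cons x a ih =>
    intro b
    cases b with
    | nil => simp
    | cons y b => simp only [List.zipWith_cons_cons, List.sum_cons, ih]; ring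

lemma chain_bound (ℐ : Finset (ℝ × ℝ)) (Q : ℝ → Prop) (h : ℝ → ℝ → ℝ)
    (hS : ∀ a, Q a → ∃ p ∈ ℐ, a ∈ Set.Icc p.1 p.2)
    (hzero : ∀ a b, Q a → Q b → a ≤ b →
      (∃ p ∈ ℐ, a ∈ Set.Icc p.1 p.2 ∧ b ∈ Set.Icc p.1 p.2) → h a b = 0)
    (hone : ∀ a b, Q a → Q b → a ≤ b → |h a b| ≤ 1) :
    ∀ l : List ℝ, l.Pairwise (· ≤ ·) → (∀ a ∈ l, Q a) → ∀ a0 : ℝ, (∀ a ∈ l, a0 ≤ a) →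
      |(List.zipWith h l l.tail).sum| ≤ ((ℐ.filter fun p => a0 < p.1).card : ℝ) := by
  intro l
  induction l with
  | nil => intro _ _ a0 _; simp
  | cons a t ih =>
    intro hsort hmem a0 hlb
    cases t with
    | nil => simp
    | cons b t' =>
      have hsort' : (b :: t').Pairwise (· ≤ ·) := (List.pairwise_cons.mp hsort).2
      have hab : a ≤ b := (List.pairwise_cons.mp hsort).1 b (by simp)
      have hmem' : ∀ c ∈ (b :: t'), Q c := fun c hc => hmem c (by simp [hc])
      have hlbb : ∀ c ∈ (b :: t'), b ≤ c := by
        intro c hc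
        rcases List.mem_cons.mp hc with rfl | hc
        · exact le_refl c
        · exact (List.pairwise_cons.mp hsort').1 c hc
      have hrest := ih hsort' hmem' b hlbb
      have hQa : Q a := hmem a (by simp)
      have hQb : Q b := hmem b (by simp)
      have hsum : (List.zipWith h (a :: b :: t') (a :: b :: t').tail).sum
          = h a b + (List.zipWith h (b :: t') (b :: t').tail).sum := by
        simp
      rw [hsum]
      by_cases hsame : ∃ p ∈ ℐ, a ∈ Set.Icc p.1 p.2 ∧ b ∈ Set.Icc p.1 p.2
      · rw [hzero a b hQa hQb hab hsame, zero_add]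
        refine hrest.trans ?_
        have : (ℐ.filter fun p => b < p.1) ⊆ (ℐ.filter fun p => a0 < p.1) := by
          intro p hp
          simp only [Finset.mem_filter] at hp ⊢
          exact ⟨hp.1, lt_of_le_of_lt ((hlb a (by simp)).trans hab) hp.2⟩
        exact_mod_cast Finset.card_le_card this
      · obtain ⟨p, hpI, hbp⟩ := hS b hQb
        have hap : a < p.1 := by
          by_contra hcon
          push_neg at hcon
          exact hsame ⟨p, hpI, ⟨hcon, hab.trans hbp.2⟩, hbp⟩
        have hpmem : p ∈ ℐ.filter fun q => a0 < q.1 :=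
          Finset.mem_filter.mpr ⟨hpI, lt_of_le_of_lt (hlb a (by simp)) hap⟩
        have hsub : (ℐ.filter fun q => b < q.1) ⊆ (ℐ.filter fun q => a0 < q.1).erase p := by
          intro q hq
          simp only [Finset.mem_filter] at hq
          refine Finset.mem_erase.mpr ⟨?_, Finset.mem_filter.mpr ⟨hq.1,
            lt_of_le_of_lt ((hlb a (by simp)).trans hab) hq.2⟩⟩
          rintro rfl
          exact absurd hbp.1 (not_le.mpr hq.2)
        have hcard : (ℐ.filter fun q => b < q.1).card + 1
            ≤ (ℐ.filter fun q => a0 < q.1).card := by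
          calc (ℐ.filter fun q => b < q.1).card + 1
              ≤ ((ℐ.filter fun q => a0 < q.1).erase p).card + 1 :=
                by exact Nat.add_le_add_right (Finset.card_le_card hsub) 1
            _ = (ℐ.filter fun q => a0 < q.1).card := by
                rw [Finset.card_erase_of_mem hpmem]
                have := Finset.card_pos.mpr ⟨p, hpmem⟩
                omega
        have : ((ℐ.filter fun q => b < q.1).card : ℝ) + 1
            ≤ ((ℐ.filter fun q => a0 < q.1).card : ℝ) := by exact_mod_cast hcard
        calc |h a b + (List.zipWith h (b :: t') (b :: t').tail).sum|
            ≤ |h a b| + |(List.zipWith h (b :: t') (b :: t').tail).sum| := abs_add_le _ _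
          _ ≤ 1 + ((ℐ.filter fun q => b < q.1).card : ℝ) :=
              add_le_add (hone a b hQa hQb hab) hrest
          _ ≤ _ := by linarith

lemma key_bound (α : ℝ) (hα0 : 0 < α) (ℐ 𝒥 : Finset (ℝ × ℝ))
    (hI : ∀ p ∈ ℐ, p.1 ≤ p.2 ∧ Set.Icc p.1 p.2 ⊆ Set.Icc (0 : ℝ) 1)
    (hJ : ∀ q ∈ 𝒥, q.1 ≤ q.2 ∧ Set.Icc q.1 q.2 ⊆ Set.Icc (0 : ℝ) 1)
    (f : ℝ → ℝ)
    (hmono : StrictMonoOn f (⋃ p ∈ ℐ, Set.Icc p.1 p.2))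
    (htrans : ∀ p ∈ ℐ, ∃ q ∈ 𝒥, q.2 - q.1 = p.2 - p.1 ∧
      ∀ t ∈ Set.Icc p.1 p.2, f t = t + (q.1 - p.1))
    {n : ℕ} (x : Fin n → ℝ)
    (hx : ∀ i, x i ∈ ⋃ p ∈ ℐ, Set.Icc p.1 p.2) :
    |Emst α (f ∘ x) - Emst α x| ≤ (ℐ.card : ℝ) := by
  set S : Set ℝ := ⋃ p ∈ ℐ, Set.Icc p.1 p.2 with hSdef
  have hQ : ∀ a ∈ S, ∃ p ∈ ℐ, a ∈ Set.Icc p.1 p.2 := by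
    intro a ha
    rw [Set.mem_iUnion₂] at ha
    obtain ⟨p, hp, h⟩ := ha
    exact ⟨p, hp, h⟩
  have hSsub : S ⊆ Set.Icc (0 : ℝ) 1 := by
    intro a ha
    obtain ⟨p, hpI, hap⟩ := hQ a ha
    exact (hI p hpI).2 hap
  have hfmem : ∀ t ∈ S, f t ∈ Set.Icc (0 : ℝ) 1 := by
    intro t ht
    obtain ⟨p, hpI, htp⟩ := hQ t ht
    obtain ⟨q, hqJ, hlen, hft⟩ := htrans p hpI
    have h1 := (hJ q hqJ).2
    refine h1 ?_
    rw [hft t htp]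
    constructor
    · linarith [htp.1]
    · linarith [htp.2]
  set M : Multiset ℝ := Multiset.map x Finset.univ.val with hM
  set l : List ℝ := Multiset.sort M (· ≤ ·) with hl
  have hlmem : ∀ a ∈ l, a ∈ S := by
    intro a ha
    rw [hl, Multiset.mem_sort] at ha
    obtain ⟨i, _, rfl⟩ := Multiset.mem_map.mp ha
    exact hx i
  have hlsorted : l.Pairwise (· ≤ ·) := Multiset.pairwise_sort _ _
  have hmap : Multiset.sort (Multiset.map (f ∘ x) Finset.univ.val) (· ≤ ·) = l.map f := by
    have hperm : (Multiset.sort (Multiset.map (f ∘ x) Finset.univ.val) (· ≤ ·)).Perm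
        (l.map f) := by
      rw [← Multiset.coe_eq_coe, Multiset.sort_eq, ← Multiset.map_coe, hl, Multiset.sort_eq,
        hM, Multiset.map_map]
    have hsorted2 : (l.map f).Pairwise (· ≤ ·) := by
      refine List.pairwise_map.mpr ?_
      refine hlsorted.imp_of_mem ?_
      intro a b ha hb hab
      exact hmono.monotoneOn (hlmem a ha) (hlmem b hb) hab
    exact hperm.eq_of_pairwise' (Multiset.pairwise_sort _ _) hsorted2
  have e1 : Emst α (f ∘ x) = (List.zipWith (fun u v => (f v - f u) ^ α) l l.tail).sum := by
    show (List.zipWith (fun u v => (v - u) ^ α)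
        (Multiset.sort (Multiset.map (f ∘ x) Finset.univ.val) (· ≤ ·))
        (Multiset.sort (Multiset.map (f ∘ x) Finset.univ.val) (· ≤ ·)).tail).sum = _
    rw [hmap, ← List.map_tail, List.zipWith_map]
  have e2 : Emst α x = (List.zipWith (fun u v => (v - u) ^ α) l l.tail).sum := rfl
  rw [e1, e2, ← sum_zipWith_sub]
  have hbound := chain_bound ℐ (· ∈ S)
    (fun u v => (f v - f u) ^ α - (v - u) ^ α)
    (fun a ha => hQ a ha)
    (by
      intro a b ha hb hab ⟨p, hpI, hap, hbp⟩
      obtain ⟨q, hqJ, hlen, hft⟩ := htrans p hpI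
      show (f b - f a) ^ α - (b - a) ^ α = 0
      rw [hft a hap, hft b hbp]
      have heq : b + (q.1 - p.1) - (a + (q.1 - p.1)) = b - a := by ring
      rw [heq, sub_self])
    (by
      intro a b ha hb hab
      have h1 : (0:ℝ) ≤ f b - f a := by
        have := hmono.monotoneOn ha hb hab
        linarith
      have h2 : f b - f a ≤ 1 := by
        have := (hfmem a ha).1
        have := (hfmem b hb).2
        linarith
      have h3 : (0:ℝ) ≤ b - a := by linarith
      have h4 : b - a ≤ 1 := by
        have := (hSsub ha).1
        have := (hSsub hb).2
        linarith
      have r1 : (0:ℝ) ≤ (f b - f a) ^ α := Real.rpow_nonneg h1 α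
      have r2 : (f b - f a) ^ α ≤ 1 := Real.rpow_le_one h1 h2 hα0.le
      have r3 : (0:ℝ) ≤ (b - a) ^ α := Real.rpow_nonneg h3 α
      have r4 : (b - a) ^ α ≤ 1 := Real.rpow_le_one h3 h4 hα0.le
      show |(f b - f a) ^ α - (b - a) ^ α| ≤ 1
      rw [abs_le]
      constructor <;> linarith)
    l hlsorted hlmem 0 (fun a ha => (hSsub (hlmem a ha)).1)
  refine hbound.trans ?_
  exact_mod_cast Finset.card_le_card (Finset.filter_subset _ _)

/-- pushing forward by a natural map (an order-preserving,
interval-wise translation between finite collections of disjoint closed intervals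
in `[0,1]`) preserves the limit in probability of `n^{-(d-α)/d} E⁰_α` for i.i.d.
samples. -/
theorem stmt18 (d α : ℝ) (hα0 : 0 < α) (hαd : α < d) (hd1 : d ≤ 1)
    (ℐ 𝒥 : Finset (ℝ × ℝ))
    (hI : ∀ p ∈ ℐ, p.1 ≤ p.2 ∧ Set.Icc p.1 p.2 ⊆ Set.Icc (0 : ℝ) 1)
    (hJ : ∀ q ∈ 𝒥, q.1 ≤ q.2 ∧ Set.Icc q.1 q.2 ⊆ Set.Icc (0 : ℝ) 1)
    (hIdisj : ((ℐ : Set (ℝ × ℝ))).Pairwise fun p q =>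
      Disjoint (Set.Icc p.1 p.2) (Set.Icc q.1 q.2))
    (hJdisj : ((𝒥 : Set (ℝ × ℝ))).Pairwise fun p q =>
      Disjoint (Set.Icc p.1 p.2) (Set.Icc q.1 q.2))
    (f : ℝ → ℝ)
    (hmono : StrictMonoOn f (⋃ p ∈ ℐ, Set.Icc p.1 p.2))
    (htrans : ∀ p ∈ ℐ, ∃ q ∈ 𝒥, q.2 - q.1 = p.2 - p.1 ∧
      ∀ t ∈ Set.Icc p.1 p.2, f t = t + (q.1 - p.1))
    (μ : Measure ℝ) [IsProbabilityMeasure μ]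
    (hsupp : μ ((⋃ p ∈ ℐ, Set.Icc p.1 p.2)ᶜ) = 0)
    (c : ℝ)
    (hconv : ∀ ε : ℝ, 0 < ε →
      Tendsto (fun n : ℕ =>
        (Measure.pi fun _ : Fin n => μ)
          {x : Fin n → ℝ | ε < |(n : ℝ) ^ (-((d - α) / d)) * Emst α x - c|})
        atTop (nhds 0)) :
    ∀ ε : ℝ, 0 < ε →
      Tendsto (fun n : ℕ =>
        (Measure.pi fun _ : Fin n => μ)
          {x : Fin n → ℝ | ε < |(n : ℝ) ^ (-((d - α) / d)) * Emst α (f ∘ x) - c|})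
        atTop (nhds 0) := by
  intro ε hε
  have hd0 : 0 < d := hα0.trans hαd
  have hβ : 0 < (d - α) / d := div_pos (by linarith) hd0
  have hkb : ∀ {m : ℕ} (x : Fin m → ℝ), (∀ i, x i ∈ ⋃ p ∈ ℐ, Set.Icc p.1 p.2) →
      |Emst α (f ∘ x) - Emst α x| ≤ (ℐ.card : ℝ) :=
    fun x hx => key_bound α hα0 ℐ 𝒥 hI hJ f hmono htrans x hx
  have htend : Tendsto (fun n : ℕ => (n : ℝ) ^ (-((d - α) / d)) * (ℐ.card : ℝ))
      atTop (nhds 0) := by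
    have h1 : Tendsto (fun t : ℝ => t ^ (-((d - α) / d))) atTop (nhds 0) :=
      tendsto_rpow_neg_atTop hβ
    have h2 : Tendsto (fun n : ℕ => (n : ℝ) ^ (-((d - α) / d))) atTop (nhds 0) :=
      h1.comp tendsto_natCast_atTop_atTop
    simpa using h2.mul_const (ℐ.card : ℝ)
  have hev : ∀ᶠ n : ℕ in atTop,
      (n : ℝ) ^ (-((d - α) / d)) * (ℐ.card : ℝ) < ε / 2 :=
    htend.eventually_lt_const (by linarith)
  have hconv2 := hconv (ε / 2) (by linarith)
  refine tendsto_of_tendsto_of_tendsto_of_le_of_le' tendsto_const_nhds hconv2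
    (Eventually.of_forall fun n => zero_le) ?_
  filter_upwards [hev] with n hn
  set S : Set ℝ := ⋃ p ∈ ℐ, Set.Icc p.1 p.2 with hSdef
  set e : ℝ := (n : ℝ) ^ (-((d - α) / d)) with he
  have he0 : 0 ≤ e := Real.rpow_nonneg (Nat.cast_nonneg n) _
  set N : Set (Fin n → ℝ) := ⋃ i : Fin n, Function.eval i ⁻¹' Sᶜ with hN
  have hNnull : (Measure.pi fun _ : Fin n => μ) N = 0 :=
    measure_iUnion_null fun i => Measure.pi_eval_preimage_null _ hsupp
  have hsub : {x : Fin n → ℝ | ε < |e * Emst α (f ∘ x) - c|}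
      ⊆ {x : Fin n → ℝ | ε / 2 < |e * Emst α x - c|} ∪ N := by
    intro x hx
    by_cases hxS : ∀ i, x i ∈ S
    · left
      have hb := hkb x hxS
      have key : |e * Emst α (f ∘ x) - c| ≤ |e * Emst α x - c| + e * (ℐ.card : ℝ) := by
        have : e * Emst α (f ∘ x) - c
            = (e * Emst α x - c) + e * (Emst α (f ∘ x) - Emst α x) := by ring
        rw [this]
        refine (abs_add_le _ _).trans ?_
        gcongr
        rw [abs_mul, abs_of_nonneg he0]
        exact mul_le_mul_of_nonneg_left hb he0
      have hx' : ε < |e * Emst α (f ∘ x) - c| := hx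
      show ε / 2 < |e * Emst α x - c|
      linarith
    · right
      push_neg at hxS
      obtain ⟨i, hi⟩ := hxS
      exact Set.mem_iUnion.mpr ⟨i, hi⟩
  calc (Measure.pi fun _ : Fin n => μ) {x : Fin n → ℝ | ε < |e * Emst α (f ∘ x) - c|}
      ≤ (Measure.pi fun _ : Fin n => μ)
        ({x : Fin n → ℝ | ε / 2 < |e * Emst α x - c|} ∪ N) := measure_mono hsub
    _ ≤ (Measure.pi fun _ : Fin n => μ) {x : Fin n → ℝ | ε / 2 < |e * Emst α x - c|}
        + (Measure.pi fun _ : Fin n => μ) N := measure_union_le _ _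
    _ = (Measure.pi fun _ : Fin n => μ) {x : Fin n → ℝ | ε / 2 < |e * Emst α x - c|} := by
        rw [hNnull, add_zero]
end
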